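/- arXiv:2309.03849 — 7 statements merged into one kernel-verified Lean document; each statement's English description precedes it below -/
import Mathlib

section
/- For every positive integer n, the intersection of Θ_n with the unit circle { z ∈ ℂ : |z| = 1 } equals the set of points { e^{2πi p/q} : p/q ∈ F_n }, i.e., the set of points e^{2πi p/q} where p, q are integers with 0 ≤ p ≤ q ≤ n, q ≥ 1, and gcd(p,q) = 1. -/
/-- An `n`-by-`n` real matrix is (row-)stochastic if its entries are nonnegative
and each of its rows sums to `1`. -/
def IsStochastic {n : ℕ} (A : Matrix (Fin n) (Fin n) ℝ) : Prop :=
  (∀ i j, 0 ≤ A i j) ∧ ∀ i, ∑ j, A i j = 1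

/-- `Theta n` is the set of complex numbers that are an eigenvalue of some
`n`-by-`n` row-stochastic matrix. -/
def Theta (n : ℕ) : Set ℂ :=
  {z | ∃ A : Matrix (Fin n) (Fin n) ℝ, IsStochastic A ∧
    ∃ v : Fin n → ℂ, v ≠ 0 ∧ (A.map Complex.ofReal).mulVec v = z • v}

/-!
If `A v = z v` with `A` stochastic and `‖z‖ = 1`, then at a coordinate `i` where `‖v i‖` is
maximal, `z v i` is a convex combination of the `v j` with `‖v j‖ ≤ ‖z v i‖`; by strict convexity
of the norm every `v j` with `A i j ≠ 0` equals `z v i`. Following such entries from a maximal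
coordinate gives a walk along which `v` is multiplied by `z` at each step; it revisits a vertex
within `n` steps, so `z ^ q = 1` for some `0 < q ≤ n`. Conversely, a `q`-th root of unity `z` is
an eigenvalue of the permutation matrix of a `q`-cycle, with eigenvector
`(1, z, …, z ^ (q - 1), 0, …, 0)`.
Primitive roots of unity of order `q` are exactly the `e^{2πi p/q}` with `p` coprime to `q`.
-/

open Finset

theorem eq_sum_smul_of_norm_le_norm_sum_smul {ι E : Type*} [NormedAddCommGroup E]
    [InnerProductSpace ℝ E] {s : Finset ι} {w : ι → ℝ} {x : ι → E}
    (hw : ∀ i ∈ s, 0 ≤ w i) (hw₁ : ∑ i ∈ s, w i = 1)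
    (hx : ∀ i ∈ s, ‖x i‖ ≤ ‖∑ i ∈ s, w i • x i‖) {j : ι} (hj : j ∈ s) (hwj : w j ≠ 0) :
    x j = ∑ i ∈ s, w i • x i := by
  set u := ∑ i ∈ s, w i • x i
  have hinner_le : ∀ i ∈ s, inner ℝ (x i) u ≤ ‖u‖ ^ 2 := fun i hi =>
    (real_inner_le_norm _ _).trans (by nlinarith [hx i hi, norm_nonneg (x i)])
  have hsum : ∑ i ∈ s, w i * (‖u‖ ^ 2 - inner ℝ (x i) u) = 0 := by
    simp only [mul_sub, sum_sub_distrib, ← sum_mul, hw₁, one_mul]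
    rw [← real_inner_self_eq_norm_sq, sum_inner]
    simp only [real_inner_smul_left, sub_self]
  have hinner_eq : inner ℝ (x j) u = ‖u‖ ^ 2 := by
    have := (sum_eq_zero_iff_of_nonneg fun i hi =>
      mul_nonneg (hw i hi) (sub_nonneg.2 (hinner_le i hi))).1 hsum j hj
    linarith [(mul_eq_zero.1 this).resolve_left hwj]
  have : ‖x j - u‖ ^ 2 ≤ 0 := by
    rw [norm_sub_sq_real, hinner_eq]
    nlinarith [hx j hj, norm_nonneg (x j)]
  exact sub_eq_zero.1 (norm_eq_zero.1 (by nlinarith [norm_nonneg (x j - u)]))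

theorem exists_pow_eq_one_of_apply_eq_mul {α G₀ : Type*} [Fintype α] [GroupWithZero G₀]
    {s : Set α} {g : α → α} {w : α → G₀} {z : G₀} (hg : Set.MapsTo g s s)
    (hw : ∀ a ∈ s, w (g a) = z * w a) (hz : z ≠ 0) {a : α} (ha : a ∈ s) (hwa : w a ≠ 0) :
    ∃ q, 0 < q ∧ q ≤ Fintype.card α ∧ z ^ q = 1 := by
  have horbit : ∀ k, w (g^[k] a) = z ^ k * w a := by
    intro k
    induction k with
    | zero => simp
    | succ k ih =>
      rw [Function.iterate_succ_apply', hw _ ((hg.iterate k) ha), ih, pow_succ', mul_assoc]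
  have hinj : ∀ {k l}, k < l → g^[k] a = g^[l] a → z ^ (l - k) = 1 := by
    intro k l hkl hkl'
    have : z ^ k = z ^ l := mul_right_cancel₀ hwa (by rw [← horbit, ← horbit, hkl'])
    rw [pow_sub₀ _ hz hkl.le, ← this, mul_inv_cancel₀ (pow_ne_zero _ hz)]
  obtain ⟨k, l, hne, hkl⟩ := Fintype.exists_ne_map_eq_of_card_lt
    (fun k : Fin (Fintype.card α + 1) => g^[k] a) (by simp)
  rcases lt_or_gt_of_ne (Fin.val_injective.ne hne) with h | h
  · exact ⟨l - k, by omega, by omega, hinj h hkl⟩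
  · exact ⟨k - l, by omega, by omega, hinj h hkl.symm⟩

namespace IsStochastic

variable {n : ℕ} {A : Matrix (Fin n) (Fin n) ℝ}

theorem exists_ne_zero (hA : IsStochastic A) (i : Fin n) : ∃ j, A i j ≠ 0 := by
  by_contra! h
  simpa [h] using hA.2 i

theorem apply_eq_mul_of_forall_norm_le (hA : IsStochastic A) {z : ℂ} {v : Fin n → ℂ}
    (hv : (A.map Complex.ofReal).mulVec v = z • v) (hz : ‖z‖ = 1) {i : Fin n}
    (hi : ∀ j, ‖v j‖ ≤ ‖v i‖) {j : Fin n} (hij : A i j ≠ 0) : v j = z * v i := by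
  have hrow : z * v i = ∑ k, A i k • v k := by
    simpa [Matrix.mulVec, dotProduct, Complex.real_smul] using (congrFun hv i).symm
  rw [hrow]
  refine eq_sum_smul_of_norm_le_norm_sum_smul (fun k _ => hA.1 i k) (hA.2 i)
    (fun k _ => ?_) (mem_univ j) hij
  rw [← hrow, norm_mul, hz, one_mul]
  exact hi k

end IsStochastic

theorem exists_pow_eq_one_of_mem_Theta {n : ℕ} {z : ℂ} (hz : z ∈ Theta n) (hz₁ : ‖z‖ = 1) :
    ∃ q, 0 < q ∧ q ≤ n ∧ z ^ q = 1 := by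
  obtain ⟨A, hA, v, hv, hAv⟩ := hz
  obtain ⟨j, hj⟩ := Function.ne_iff.1 hv
  have : Nonempty (Fin n) := ⟨j⟩
  obtain ⟨i, hi⟩ := Finite.exists_max fun k => ‖v k‖
  choose f hf using hA.exists_ne_zero
  set s := {k | ‖v k‖ = ‖v i‖}
  have hstep : ∀ k ∈ s, v (f k) = z * v k := fun k hk =>
    hA.apply_eq_mul_of_forall_norm_le hAv hz₁ (fun l => hk.symm ▸ hi l) (hf k)
  have hmaps : Set.MapsTo f s s := fun k hk => by
    simpa only [s, Set.mem_ofPred, hstep k hk, norm_mul, hz₁, one_mul] using hk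
  have hvi : v i ≠ 0 := norm_ne_zero_iff.1 (norm_pos_iff.2 hj |>.trans_le (hi j)).ne'
  simpa using exists_pow_eq_one_of_apply_eq_mul hmaps hstep (by rintro rfl; simp at hz₁)
    (show i ∈ s from rfl) hvi

theorem mem_Theta_of_pow_eq_one {n q : ℕ} {z : ℂ} (hq : 0 < q) (hqn : q ≤ n) (hz : z ^ q = 1) :
    z ∈ Theta n := by
  have : NeZero n := ⟨by omega⟩
  set σ := Fin.cycleRange (⟨q - 1, by omega⟩ : Fin n)
  set u : ℕ → ℂ := fun k => if k < q then z ^ k else 0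
  have hσ : ∀ j, u (σ j) = z * u j := by
    intro j
    rcases le_or_gt (j : ℕ) (q - 1) with h | h
    · rw [Fin.coe_cycleRange_of_le (by simpa [Fin.le_def] using h)]
      split_ifs with hj
      · have hj' : (j : ℕ) = q - 1 := congrArg Fin.val hj
        simp only [u, hj', hq, if_true, pow_zero, show q - 1 < q by omega, ← pow_succ',
          Nat.sub_add_cancel hq, hz]
      · have hj' : (j : ℕ) ≠ q - 1 := fun h => hj (Fin.ext h)
        simp only [u, show (j : ℕ) + 1 < q by omega, show (j : ℕ) < q by omega, if_true, pow_succ']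
    · rw [Fin.cycleRange_of_gt (by simpa [Fin.lt_def] using h)]
      simp [u, show ¬ (j : ℕ) < q by omega]
  have hmap : (σ.permMatrix ℝ).map Complex.ofReal = σ.permMatrix ℂ :=
    PEquiv.map_toMatrix Complex.ofRealHom _
  refine ⟨σ.permMatrix ℝ, Matrix.mem_rowStochastic_iff_sum.1 Matrix.permMatrix_mem_rowStochastic,
    fun j => u j, Function.ne_iff.2 ⟨⟨0, by omega⟩, by simp [u, hq]⟩, ?_⟩
  rw [hmap, Matrix.permMatrix_mulVec]
  ext j
  simp [hσ]

theorem mem_Theta_and_norm_eq_one_iff {n : ℕ} {z : ℂ} :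
    z ∈ Theta n ∧ ‖z‖ = 1 ↔ ∃ q, 0 < q ∧ q ≤ n ∧ z ^ q = 1 := by
  constructor
  · rintro ⟨hz, hz₁⟩
    exact exists_pow_eq_one_of_mem_Theta hz hz₁
  · rintro ⟨q, hq, hqn, hzq⟩
    exact ⟨mem_Theta_of_pow_eq_one hq hqn hzq, Complex.norm_eq_one_of_pow_eq_one hzq hq.ne'⟩

open Complex Real in
theorem exists_pow_eq_one_iff_exists_coprime_exp {n : ℕ} {z : ℂ} :
    (∃ q, 0 < q ∧ q ≤ n ∧ z ^ q = 1) ↔ ∃ p q : ℕ, 0 < q ∧ p ≤ q ∧ q ≤ n ∧ Nat.gcd p q = 1 ∧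
      z = exp (2 * π * I * ((p : ℂ) / (q : ℂ))) := by
  constructor
  · rintro ⟨q, hq, hqn, hzq⟩
    have hd : 0 < orderOf z := orderOf_pos_iff.2 (isOfFinOrder_iff_pow_eq_one.2 ⟨q, hq, hzq⟩)
    obtain ⟨p, hp, hcop, hexp⟩ :=
      (isPrimitiveRoot_iff z _ hd.ne').1 (IsPrimitiveRoot.orderOf z)
    exact ⟨p, orderOf z, hd, hp.le, (Nat.le_of_dvd hq (orderOf_dvd_of_pow_eq_one hzq)).trans hqn,
      hcop, hexp.symm⟩
  · rintro ⟨p, q, hq, -, hqn, hcop, rfl⟩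
    exact ⟨q, hq, hqn, (isPrimitiveRoot_exp_of_coprime p q hq.ne' hcop).pow_eq_one⟩

theorem theta_inter_circle_general (n : ℕ) :
    Theta n ∩ {z : ℂ | ‖z‖ = 1} =
      {z : ℂ | ∃ p q : ℕ, 0 < q ∧ p ≤ q ∧ q ≤ n ∧ Nat.gcd p q = 1 ∧
        z = Complex.exp (2 * Real.pi * Complex.I * ((p : ℂ) / (q : ℂ)))} := by
  ext z
  exact mem_Theta_and_norm_eq_one_iff.trans exists_pow_eq_one_iff_exists_coprime_exp

/-- The region `Θ_n` intersects the unit circle precisely at the points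
`e^{2πi p/q}` where `p/q` is a Farey fraction of order `n`. -/
theorem theta_inter_circle (n : ℕ) (hn : 0 < n) :
    Theta n ∩ {z : ℂ | ‖z‖ = 1} =
      {z : ℂ | ∃ p q : ℕ, 0 < q ∧ p ≤ q ∧ q ≤ n ∧ Nat.gcd p q = 1 ∧
        z = Complex.exp (2 * Real.pi * Complex.I * ((p : ℂ) / (q : ℂ)))} :=
  theta_inter_circle_general n
end

section
/- Let q and s be integers with 2 < q < s and gcd(q,s) = 1, let k be an integer, let ρ ≥ 0 be a real number, and let α ∈ (0,1) with β := 1 − α. If sin(πk/s) ≠ 0 (equivalently, the imaginary part of e^{πik/s} is nonzero), then (ρ e^{πik/s})^s − β (ρ e^{πik/s})^{s−q} − α ≠ 0. -/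
/-!
On the ray `z = ρ e^{iθ}`, `θ = πk/s`, the power `z^s = ρ^s e^{iπk}` is real, so the imaginary
part of `z^s − β z^{s−q} − α` is `−β ρ^{s−q} sin((s−q)θ)`. A zero with `ρ ≠ 0` therefore forces
`sin(sθ) = sin((s−q)θ) = 0`, and since `gcd(s−q, s) = 1`, Bézout gives `sin θ = 0`.
-/

open Complex Real

/-- Bézout: `θ = u (mθ) + v (nθ)` with `u m + v n = 1`. -/
theorem Real.sin_eq_zero_of_coprime {m n : ℕ} (h : m.Coprime n) {θ : ℝ}
    (hm : sin (m * θ) = 0) (hn : sin (n * θ) = 0) : sin θ = 0 := by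
  obtain ⟨a, ha⟩ := Real.sin_eq_zero_iff.mp hm
  obtain ⟨b, hb⟩ := Real.sin_eq_zero_iff.mp hn
  obtain ⟨u, v, huv⟩ := Nat.isCoprime_iff_coprime.mpr h
  have hθ : θ = (u * a + v * b : ℤ) * π := by
    have huv' : (u : ℝ) * m + v * n = 1 := by exact_mod_cast huv
    push_cast
    linear_combination (-θ) * huv' - u * ha - v * hb
  rw [hθ]
  exact Real.sin_int_mul_pi _

theorem Complex.im_ofReal_mul_exp_mul_I_pow (ρ θ : ℝ) (n : ℕ) :
    ((ρ * exp (θ * I)) ^ n).im = ρ ^ n * Real.sin (n * θ) := by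
  rw [mul_pow, ← ofReal_pow, ← exp_nat_mul, ← mul_assoc, ← ofReal_natCast, ← ofReal_mul,
    im_ofReal_mul, exp_ofReal_mul_I_im]

/-- The imaginary part of the equation is `-β ρ^m sin (mθ) = 0`. -/
theorem sin_mul_eq_zero_of_pow_sub_mul_pow_sub_eq_zero {ρ θ α β : ℝ} {n m : ℕ}
    (hρ : ρ ≠ 0) (hβ : β ≠ 0) (hn : Real.sin (n * θ) = 0)
    (h : (ρ * exp (θ * I)) ^ n - β * (ρ * exp (θ * I)) ^ m - α = 0) :
    Real.sin (m * θ) = 0 := by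
  have him := congrArg Complex.im h
  simp only [sub_im, im_ofReal_mul, im_ofReal_mul_exp_mul_I_pow, hn, ofReal_im, zero_im,
    mul_zero, zero_sub, sub_zero, neg_eq_zero] at him
  simpa [hβ, hρ] using him

theorem forbidden_ray_s_general (q s : ℕ) (hqs : q < s) (hco : Nat.Coprime q s)
    (k : ℤ) (ρ : ℝ) (α : ℝ) (hα : α ∈ Set.Ioo (0 : ℝ) 1)
    (hsin : Real.sin (Real.pi * (k : ℝ) / (s : ℝ)) ≠ 0) :
    ((ρ : ℂ) * Complex.exp (Real.pi * Complex.I * (k : ℂ) / (s : ℂ))) ^ s -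
        ((1 : ℂ) - (α : ℂ)) *
          ((ρ : ℂ) * Complex.exp (Real.pi * Complex.I * (k : ℂ) / (s : ℂ))) ^ (s - q) -
        (α : ℂ) ≠ 0 := by
  obtain ⟨hα0, hα1⟩ := hα
  have hs : (s : ℝ) ≠ 0 := Nat.cast_ne_zero.mpr (by omega)
  set θ : ℝ := π * k / s with hθ
  have hsθ : Real.sin (s * θ) = 0 := by
    rw [hθ, mul_div_cancel₀ _ hs, mul_comm]
    exact Real.sin_int_mul_pi k
  have hexp : exp (π * I * k / s) = exp (θ * I) := by
    rw [hθ]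
    push_cast
    ring_nf
  rw [hexp, ← ofReal_one, ← ofReal_sub]
  intro h
  rcases eq_or_ne ρ 0 with rfl | hρ
  · simp [zero_pow (by omega : s ≠ 0), zero_pow (by omega : s - q ≠ 0), hα0.ne'] at h
  have hsqθ := sin_mul_eq_zero_of_pow_sub_mul_pow_sub_eq_zero hρ (by linarith) hsθ h
  exact hsin (Real.sin_eq_zero_of_coprime ((Nat.coprime_self_sub_left hqs.le).mpr hco) hsqθ hsθ)

/-- Forbidden rays for the Type I reduced Ito polynomial `P^I_α(t) = t^s − β t^{s−q} − α`:
if `sin(πk/s) ≠ 0`, then no point `ρ e^{πik/s}` on the corresponding ray is a zero. -/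
theorem forbidden_ray_s (q s : ℕ) (hq : 2 < q) (hqs : q < s) (hco : Nat.Coprime q s)
    (k : ℤ) (ρ : ℝ) (hρ : 0 ≤ ρ) (α : ℝ) (hα : α ∈ Set.Ioo (0 : ℝ) 1)
    (hsin : Real.sin (Real.pi * (k : ℝ) / (s : ℝ)) ≠ 0) :
    ((ρ : ℂ) * Complex.exp (Real.pi * Complex.I * (k : ℂ) / (s : ℂ))) ^ s -
        ((1 : ℂ) - (α : ℂ)) *
          ((ρ : ℂ) * Complex.exp (Real.pi * Complex.I * (k : ℂ) / (s : ℂ))) ^ (s - q) -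
        (α : ℂ) ≠ 0 :=
  forbidden_ray_s_general q s hqs hco k ρ α hα hsin
end

section
/- Let q and s be integers with 2 < q < s and gcd(q,s) = 1, let k be an integer, let ρ ≥ 0 be a real number, and let α ∈ (0,1) with β := 1 − α. If sin(πk/q) ≠ 0 (equivalently, the imaginary part of e^{πik/q} is nonzero), then (ρ e^{πik/q})^s − β (ρ e^{πik/q})^{s−q} − α ≠ 0. -/
/-!
On the ray `z = ρ e^{iθ}`, `θ = πk/q`, the power `z^q = ρ^q (-1)^k` is real, so a root satisfies
`z^{s-q} (z^q - β) = α` with a real factor `z^q - β`, which must be nonzero because `α ≠ 0`;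
hence `z^{s-q}` is real as well. Since `gcd(q, s-q) = 1`, `z` itself is then real
(for `z ≠ 0`, `z^n` is real iff `(z / z̄)^n = 1`), i.e. `ρ sin θ = 0`, and `ρ = 0` is no root.
-/

open ComplexConjugate

namespace Complex

theorem im_pow_eq_zero_iff {z : ℂ} (hz : z ≠ 0) (n : ℕ) :
    (z ^ n).im = 0 ↔ (z / conj z) ^ n = 1 := by
  rw [div_pow, ← map_pow, div_eq_one_iff_eq (by simpa using pow_ne_zero n hz),
    ← conj_eq_iff_im, eq_comm]

theorem im_eq_zero_of_im_pow_eq_zero_of_coprime {z : ℂ} {a b : ℕ} (hab : a.Coprime b)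
    (ha : (z ^ a).im = 0) (hb : (z ^ b).im = 0) : z.im = 0 := by
  rcases eq_or_ne z 0 with rfl | hz
  · rfl
  rw [← pow_one z, im_pow_eq_zero_iff hz, pow_one, ← pow_eq_one_iff_of_coprime hab,
    ← im_pow_eq_zero_iff hz, ← im_pow_eq_zero_iff hz]
  exact ⟨ha, hb⟩

theorem im_ofReal_mul_exp_mul_I_pow_s4 (ρ θ : ℝ) (n : ℕ) :
    ((ρ * exp (θ * I)) ^ n).im = ρ ^ n * Real.sin (n * θ) := by
  rw [mul_pow, ← exp_nat_mul, ← mul_assoc, ← ofReal_pow, ← ofReal_natCast, ← ofReal_mul,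
    im_ofReal_mul, exp_ofReal_mul_I_im]

theorem im_pow_sub_eq_zero_of_root {z : ℂ} {q s : ℕ} (hqs : q ≤ s) {α β : ℝ} (hα : α ≠ 0)
    (hzq : (z ^ q).im = 0) (hroot : z ^ s - β * z ^ (s - q) - α = 0) :
    (z ^ (s - q)).im = 0 := by
  have hfactor : z ^ (s - q) * (z ^ q - β) = α := by
    rw [← pow_sub_mul_pow z hqs] at hroot
    linear_combination hroot
  have him := congrArg im hfactor
  have hre := congrArg re hfactor
  simp only [mul_im, mul_re, sub_re, sub_im, ofReal_re, ofReal_im, hzq, sub_zero, mul_zero,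
    zero_add] at him hre
  have hne : (z ^ q).re - β ≠ 0 := by
    rintro h0
    rw [h0, mul_zero] at hre
    exact hα hre.symm
  exact (mul_eq_zero.mp him).resolve_right hne

end Complex

open Complex

theorem forbidden_ray_q_general (q s : ℕ) (hqs : q < s) (hco : Nat.Coprime q s)
    (k : ℤ) (ρ : ℝ) (α : ℝ) (hα : α ∈ Set.Ioo (0 : ℝ) 1)
    (hsin : Real.sin (Real.pi * (k : ℝ) / (q : ℝ)) ≠ 0) :
    ((ρ : ℂ) * Complex.exp (Real.pi * Complex.I * (k : ℂ) / (q : ℂ))) ^ s -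
        ((1 : ℂ) - (α : ℂ)) *
          ((ρ : ℂ) * Complex.exp (Real.pi * Complex.I * (k : ℂ) / (q : ℂ))) ^ (s - q) -
        (α : ℂ) ≠ 0 := by
  have hq : (q : ℝ) ≠ 0 := by rintro h; simp [h] at hsin
  set θ : ℝ := Real.pi * k / q with hθ
  rw [show Real.pi * I * (k : ℂ) / (q : ℂ) = (θ : ℂ) * I by push_cast [hθ]; ring]
  intro hroot
  have hzq : (((ρ : ℂ) * exp (θ * I)) ^ q).im = 0 := by
    rw [im_ofReal_mul_exp_mul_I_pow_s4, show (q : ℝ) * θ = k * Real.pi by rw [hθ]; field_simp,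
      Real.sin_int_mul_pi, mul_zero]
  have hzsq := im_pow_sub_eq_zero_of_root (β := 1 - α) hqs.le hα.1.ne' hzq
    (by exact_mod_cast hroot)
  have hzim := im_eq_zero_of_im_pow_eq_zero_of_coprime
    ((Nat.coprime_sub_self_right hqs.le).mpr hco) hzq hzsq
  have hρ : ρ ≠ 0 := by
    rintro rfl
    simp [zero_pow (Nat.sub_ne_zero_of_lt hqs), zero_pow (Nat.ne_zero_of_lt hqs), hα.1.ne']
      at hroot
  rw [← pow_one ((ρ : ℂ) * exp (θ * I)), im_ofReal_mul_exp_mul_I_pow_s4, Nat.cast_one, one_mul,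
    pow_one] at hzim
  exact hsin ((mul_eq_zero.mp hzim).resolve_left hρ)

/-- Forbidden rays for the Type I reduced Ito polynomial `P^I_α(t) = t^s − β t^{s−q} − α`:
if `sin(πk/q) ≠ 0`, then no point `ρ e^{πik/q}` on the corresponding ray is a zero. -/
theorem forbidden_ray_q (q s : ℕ) (hq : 2 < q) (hqs : q < s) (hco : Nat.Coprime q s)
    (k : ℤ) (ρ : ℝ) (hρ : 0 ≤ ρ) (α : ℝ) (hα : α ∈ Set.Ioo (0 : ℝ) 1)
    (hsin : Real.sin (Real.pi * (k : ℝ) / (q : ℝ)) ≠ 0) :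
    ((ρ : ℂ) * Complex.exp (Real.pi * Complex.I * (k : ℂ) / (q : ℂ))) ^ s -
        ((1 : ℂ) - (α : ℂ)) *
          ((ρ : ℂ) * Complex.exp (Real.pi * Complex.I * (k : ℂ) / (q : ℂ))) ^ (s - q) -
        (α : ℂ) ≠ 0 :=
  forbidden_ray_q_general q s hqs hco k ρ α hα hsin
end

section
/- Let n ≥ 4 be an integer and let p/q and r/s be Farey neighbors of order n with ⌊n/q⌋ = 1, q < s, and 0 < min{p/q, r/s} < max{p/q, r/s} < 1/2. If λ : [0,1] → ℂ is a continuous function such that λ(0) = e^{2πi p/q}, λ(1) = e^{2πi r/s}, and λ(α)^s − (1−α) λ(α)^{s−q} − α = 0 for every α ∈ [0,1], then λ is injective; that is, the Karpelevič arc with respect to p/q and r/s is simple. -/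
/-- The set of Farey fractions of order `n`:
rationals `p/q` with `0 ≤ p ≤ q ≤ n`, `q ≥ 1`, and `gcd(p,q) = 1`. -/
def FareySet (n : ℕ) : Set ℚ :=
  {x | ∃ p q : ℕ, 0 < q ∧ p ≤ q ∧ q ≤ n ∧ Nat.gcd p q = 1 ∧ x = (p : ℚ) / q}

/-- `(x, y)` is a Farey pair of order `n` if `x < y`, both belong to `FareySet n`,
and no element of `FareySet n` lies strictly between them. -/
def FareyPair (n : ℕ) (x y : ℚ) : Prop :=
  x < y ∧ x ∈ FareySet n ∧ y ∈ FareySet n ∧ ∀ z ∈ FareySet n, ¬(x < z ∧ z < y)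

/-- `x` and `y` are Farey neighbors of order `n` if `(x, y)` or `(y, x)` is a
Farey pair of order `n`. -/
def FareyNeighbors (n : ℕ) (x y : ℚ) : Prop :=
  FareyPair n x y ∨ FareyPair n y x

/-!
If `l a = l b = t` with `a ≠ b`, subtracting the two root equations gives `t ^ (s - q) = 1`,
hence `t ^ q = 1`; since Farey neighbours have coprime denominators, `t = 1`. But `l` never takes
the value `1`: writing `P^I_α(t) = (t - 1) Q_α(t)` with `Q_α(1) = q + α (s - q) > 0`, the set of
`α` with `l α = 1` is exactly the set where `Q_α(l α) ≠ 0`, hence relatively clopen in `[0, 1]`,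
and it misses `0` because `l 0` is a primitive `q`-th root of unity with `q > 1`.
-/

theorem Rat.den_natCast_div_natCast_of_coprime {p q : ℕ} (hq : 0 < q) (h : p.Coprime q) :
    ((p : ℚ) / q).den = q := by
  have := Rat.den_div_eq_of_coprime (a := p) (b := q) (by exact_mod_cast hq) h
  rw [Int.cast_natCast, Int.cast_natCast] at this
  exact_mod_cast this

theorem mem_fareySet_iff {n : ℕ} {x : ℚ} : x ∈ FareySet n ↔ 0 ≤ x ∧ x ≤ 1 ∧ x.den ≤ n := by
  constructor
  · rintro ⟨p, q, hq, hpq, hqn, hcop, rfl⟩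
    refine ⟨by positivity, div_le_one_of_le₀ (by exact_mod_cast hpq) (by positivity), ?_⟩
    rwa [Rat.den_natCast_div_natCast_of_coprime hq hcop]
  · rintro ⟨h0, h1, hn⟩
    obtain ⟨p, hp⟩ := Int.eq_ofNat_of_zero_le (Rat.num_nonneg.mpr h0)
    refine ⟨p, x.den, x.den_pos, ?_, hn, ?_, ?_⟩
    · exact_mod_cast hp ▸ Rat.num_le_denom_iff.mpr h1
    · simpa [hp] using x.reduced
    · exact (Rat.num_div_den x).symm.trans (by rw [hp, Int.cast_natCast])

theorem one_lt_of_pos_of_natCast_div_lt_one {p q : ℕ} (h₀ : 0 < (p : ℚ) / q)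
    (h₁ : (p : ℚ) / q < 1) : 1 < q := by
  by_contra! h
  interval_cases q
  · simp at h₀
  · simp only [Nat.cast_one, div_one] at h₀ h₁
    norm_cast at h₀ h₁
    omega

theorem exists_sub_mul_eq_one_of_isCoprime {a b : ℤ} (hb : 0 < b) (h : IsCoprime a b) (N : ℤ) :
    ∃ C D : ℤ, b * C - a * D = 1 ∧ N - b < D ∧ D ≤ N := by
  obtain ⟨u, v, huv⟩ := h
  have hdiv := Int.emod_add_mul_ediv (N + u) b
  have := Int.emod_nonneg (N + u) hb.ne'
  have := Int.emod_lt_of_pos (N + u) hb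
  exact ⟨v + a * ((N + u) / b), N - (N + u) % b, by linear_combination huv + a * hdiv,
    by omega, by omega⟩

namespace FareyPair

variable {n : ℕ} {x y : ℚ}

theorem den_mul_num_sub_num_mul_den (h : FareyPair n x y) :
    (x.den : ℤ) * y.num - x.num * y.den = 1 := by
  obtain ⟨hxy, hx, hy, hgap⟩ := h
  rw [mem_fareySet_iff] at hx hy
  obtain ⟨hx0, -, hxn⟩ := hx
  obtain ⟨-, hy1, hyn⟩ := hy
  obtain ⟨C, D, hdet, hDlo, hDhi⟩ := exists_sub_mul_eq_one_of_isCoprime (a := x.num) (b := x.den)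
    (N := n) (by exact_mod_cast x.den_pos) (Int.isCoprime_iff_gcd_eq_one.mpr x.reduced)
  have hxn' : (x.den : ℤ) ≤ n := by exact_mod_cast hxn
  have hyn' : (y.den : ℤ) ≤ n := by exact_mod_cast hyn
  have hD : 0 < D := by omega
  have hCD : Nat.Coprime C.natAbs D.natAbs :=
    Int.isCoprime_iff_gcd_eq_one.mp ⟨x.den, -x.num, by linear_combination hdet⟩
  -- `z` is the successor of `x` in `FareySet n`: a fraction `y` with `x < y < z` would force
  -- `y.den ≥ x.den + D > n`.
  set z : ℚ := C / D
  have hz_num : z.num = C := Rat.num_div_eq_of_coprime hD hCD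
  have hz_den : (z.den : ℤ) = D := Rat.den_div_eq_of_coprime hD hCD
  have hxz : x < z := by rw [Rat.lt_iff, hz_num, hz_den]; linarith
  have hz : z ∈ FareySet n := by
    have hx1 : x.num < x.den := Rat.num_lt_denom_iff.mpr (hxy.trans_le hy1)
    refine mem_fareySet_iff.mpr ⟨hx0.trans hxz.le, ?_, by omega⟩
    rw [← Rat.num_le_denom_iff, hz_num, hz_den]
    nlinarith [Rat.num_nonneg.mpr hx0]
  have hyz : y ≤ z := not_lt.mp fun hzy => hgap z hz ⟨hxz, hzy⟩
  have hzy : z ≤ y := by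
    by_contra! hlt
    have hxy' := (Rat.lt_iff x y).mp hxy
    have hyz' := (Rat.lt_iff y z).mp hlt
    rw [hz_num, hz_den] at hyz'
    have : (y.den : ℤ) =
        x.den * (y.den * C - y.num * D) + D * (x.den * y.num - x.num * y.den) := by
      linear_combination -(y.den : ℤ) * hdet
    nlinarith
  rw [← le_antisymm hzy hyz, hz_num, hz_den]
  exact hdet

theorem coprime_den (h : FareyPair n x y) : x.den.Coprime y.den :=
  Nat.isCoprime_iff_coprime.mp
    ⟨y.num, -x.num, by linear_combination h.den_mul_num_sub_num_mul_den⟩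

end FareyPair

theorem FareyNeighbors.coprime_den {n : ℕ} {x y : ℚ} (h : FareyNeighbors n x y) :
    x.den.Coprime y.den :=
  h.elim FareyPair.coprime_den fun h => (FareyPair.coprime_den h).symm

theorem IsPreconnected.forall_ne_of_eq_iff_ne {X Y Z : Type*} [TopologicalSpace X]
    [TopologicalSpace Y] [T1Space Y] [TopologicalSpace Z] [T1Space Z] {K : Set X}
    (hK : IsPreconnected K) {f : X → Y} {g : X → Z} (hf : ContinuousOn f K)
    (hg : ContinuousOn g K) {c : Y} {z : Z} (hfg : ∀ x ∈ K, f x = c ↔ g x ≠ z) {x₀ : X}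
    (hx₀ : x₀ ∈ K) (hne : f x₀ ≠ c) : ∀ x ∈ K, f x ≠ c := by
  have := isPreconnected_iff_preconnectedSpace.mp hK
  have hclopen : IsClopen {x : K | f x = c} := by
    refine ⟨isClosed_singleton.preimage hf.domRestrict, ?_⟩
    convert isClosed_singleton.isOpen_compl.preimage hg.domRestrict using 1
    ext x
    exact hfg x x.2
  intro x hx hfx
  rcases isClopen_iff.mp hclopen with h | h
  · exact h.subset (show (⟨x, hx⟩ : K) ∈ {x : K | f x = c} from hfx)
  · exact hne (h.symm.subset (Set.mem_univ (⟨x₀, hx₀⟩ : K)))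

section ReducedIto

open Finset

variable {R : Type*} [CommRing R] (q s : ℕ)

def typeIReducedIto (α t : R) : R := t ^ s - (1 - α) * t ^ (s - q) - α

def typeIReducedItoDeflated (α t : R) : R :=
  (∑ i ∈ range s, t ^ i) - (1 - α) * ∑ i ∈ range (s - q), t ^ i

theorem typeIReducedIto_eq_sub_one_mul (α t : R) :
    typeIReducedIto q s α t = (t - 1) * typeIReducedItoDeflated q s α t := by
  unfold typeIReducedIto typeIReducedItoDeflated
  linear_combination (1 - α) * geom_sum_mul t (s - q) - geom_sum_mul t s

variable {q s}

theorem typeIReducedItoDeflated_one (hqs : q ≤ s) (α : R) :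
    typeIReducedItoDeflated q s α 1 = q + α * (s - q) := by
  simp only [typeIReducedItoDeflated, one_pow, sum_const, card_range, nsmul_one,
    Nat.cast_sub hqs]
  ring

theorem eq_one_of_typeIReducedIto_eq_zero [IsDomain R] (hqs : q ≤ s) (hcop : q.Coprime s)
    {α α' t : R} (hα : α ≠ α') (h : typeIReducedIto q s α t = 0)
    (h' : typeIReducedIto q s α' t = 0) : t = 1 := by
  unfold typeIReducedIto at h h'
  have hsq : t ^ (s - q) = 1 := by
    have : (α - α') * (t ^ (s - q) - 1) = 0 := by linear_combination h - h'
    exact sub_eq_zero.mp ((mul_eq_zero.mp this).resolve_left (sub_ne_zero.mpr hα))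
  have hs : t ^ s = t ^ q := by rw [← Nat.sub_add_cancel hqs, pow_add, hsq, one_mul]
  have hq : t ^ q = 1 := by linear_combination h - hs + (1 - α) * hsq
  exact (pow_eq_one_iff_of_coprime hcop).mp ⟨hq, hs ▸ hq⟩

theorem eq_one_iff_typeIReducedItoDeflated_ne_zero (hq : 0 < q) (hqs : q ≤ s) {α : ℝ}
    (hα : 0 ≤ α) {t : ℂ} (h : typeIReducedIto q s (α : ℂ) t = 0) :
    t = 1 ↔ typeIReducedItoDeflated q s (α : ℂ) t ≠ 0 := by
  refine ⟨?_, fun hne => ?_⟩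
  · rintro rfl
    have hpos : (0 : ℝ) < q + α * (s - q) :=
      add_pos_of_pos_of_nonneg (by exact_mod_cast hq)
        (mul_nonneg hα (sub_nonneg.mpr (by exact_mod_cast hqs)))
    rw [typeIReducedItoDeflated_one hqs]
    exact_mod_cast hpos.ne'
  · rw [typeIReducedIto_eq_sub_one_mul] at h
    exact sub_eq_zero.mp ((mul_eq_zero.mp h).resolve_right hne)

end ReducedIto

theorem typeI_arc_simple_general (n p q r s : ℕ) (hq : 0 < q) (hqs : q < s)
    (hpq : Nat.gcd p q = 1) (hrs : Nat.gcd r s = 1)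
    (hnbr : FareyNeighbors n ((p : ℚ) / q) ((r : ℚ) / s))
    (hmin : 0 < min ((p : ℚ) / q) ((r : ℚ) / s))
    (hmax : max ((p : ℚ) / q) ((r : ℚ) / s) < 1 / 2)
    (l : ℝ → ℂ) (hcont : ContinuousOn l (Set.Icc (0 : ℝ) 1))
    (h0 : l 0 = Complex.exp (2 * Real.pi * Complex.I * ((p : ℂ) / (q : ℂ))))
    (hroot : ∀ α ∈ Set.Icc (0 : ℝ) 1,
      l α ^ s - ((1 : ℂ) - (α : ℂ)) * l α ^ (s - q) - (α : ℂ) = 0) :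
    Set.InjOn l (Set.Icc (0 : ℝ) 1) := by
  have hcop : q.Coprime s := by
    simpa only [Rat.den_natCast_div_natCast_of_coprime hq hpq,
      Rat.den_natCast_div_natCast_of_coprime (hq.trans hqs) hrs] using hnbr.coprime_den
  have hq1 : 1 < q := one_lt_of_pos_of_natCast_div_lt_one (hmin.trans_le (min_le_left _ _))
    ((le_max_left _ _).trans_lt (hmax.trans (by norm_num)))
  have hl0 : l 0 ≠ 1 := h0 ▸ (Complex.isPrimitiveRoot_exp_of_coprime p q hq.ne' hpq).ne_one hq1
  have hne_one : ∀ α ∈ Set.Icc (0 : ℝ) 1, l α ≠ 1 :=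
    isPreconnected_Icc.forall_ne_of_eq_iff_ne hcont
      (g := fun α : ℝ => typeIReducedItoDeflated q s (α : ℂ) (l α))
      (by unfold typeIReducedItoDeflated; fun_prop)
      (fun α hα => eq_one_iff_typeIReducedItoDeflated_ne_zero hq hqs.le hα.1 (hroot α hα))
      (Set.left_mem_Icc.mpr zero_le_one) hl0
  intro a ha b hb hab
  by_contra hne
  exact hne_one a ha <| eq_one_of_typeIReducedIto_eq_zero hqs.le hcop
    (Complex.ofReal_injective.ne hne) (hroot a ha) (hab ▸ hroot b hb)

/-- Type I Karpelevič arcs are simple: any continuous path of zeros of the Type I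
reduced Ito polynomial joining the two endpoints is injective on `[0,1]`. -/
theorem typeI_arc_simple (n p q r s : ℕ) (hn : 4 ≤ n) (hq : 0 < q) (hqs : q < s)
    (hpq : Nat.gcd p q = 1) (hrs : Nat.gcd r s = 1)
    (hnbr : FareyNeighbors n ((p : ℚ) / q) ((r : ℚ) / s))
    (hfloor : n / q = 1)
    (hmin : 0 < min ((p : ℚ) / q) ((r : ℚ) / s))
    (hmax : max ((p : ℚ) / q) ((r : ℚ) / s) < 1 / 2)
    (l : ℝ → ℂ) (hcont : ContinuousOn l (Set.Icc (0 : ℝ) 1))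
    (h0 : l 0 = Complex.exp (2 * Real.pi * Complex.I * ((p : ℂ) / (q : ℂ))))
    (h1 : l 1 = Complex.exp (2 * Real.pi * Complex.I * ((r : ℂ) / (s : ℂ))))
    (hroot : ∀ α ∈ Set.Icc (0 : ℝ) 1,
      l α ^ s - ((1 : ℂ) - (α : ℂ)) * l α ^ (s - q) - (α : ℂ) = 0) :
    Set.InjOn l (Set.Icc (0 : ℝ) 1) :=
  typeI_arc_simple_general n p q r s hq hqs hpq hrs hnbr hmin hmax l hcont h0 hroot
end

section
/- Let d, k, m, n be integers with 1 < d < m ≤ n, m = dk, and n < m + k − 1. Then there exists a continuous function μ : [0,1] → ℂ such that μ(0) = e^{2πi/k}, μ(1) = e^{2πi d/(m−1)}, (μ(γ)^k − (1−γ))^d = γ^d μ(γ) for every γ ∈ [0,1], and for every γ ∈ [0,1] the point μ(γ) is nonzero and has an argument θ(γ) (i.e., μ(γ) = |μ(γ)| e^{iθ(γ)}) satisfying 2π/k ≤ θ(γ) ≤ 2π·d/(m−1). -/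
/-!
Put `μ = σ ^ d`. As `m = d k`, it suffices to find a continuous path `σ` of roots of
`σ ^ m = 1 + γ (σ - 1)` from `e^{2πi/m}` to `e^{2πi/(m-1)}` with `arg σ ∈ [2π/m, 2π/(m-1)]`:
then `(μ ^ k - (1 - γ)) ^ d = (γ σ) ^ d = γ ^ d μ` and `arg μ = d arg σ`.

Take `σ γ` to be the fixed point of `s ↦ e^{2πi/m} (1 + γ (s - 1)) ^ (1/m)` (principal branch) on
a closed convex part of that sector kept away from `0`. Along the segment from `1` to `s` the base
stays in the sector `[0, 2π/(m-1)]` and away from `0`, so the map preserves the region, is a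
`3/5`-contraction in `s` and `2`-Lipschitz in `γ` by the mean value inequality; hence its fixed
point depends continuously on `γ`. At `γ = 0` and `γ = 1` the fixed points are the two roots of
unity.
-/

open Complex Set
open scoped Real NNReal

namespace Complex

theorem im_exp_neg_mul_I_mul (θ : ℝ) (s : ℂ) :
    (exp (-(θ : ℂ) * I) * s).im = ‖s‖ * Real.sin (arg s - θ) := by
  rw [Real.sin_sub, mul_sub, ← mul_assoc, ← mul_assoc, norm_mul_sin_arg, norm_mul_cos_arg,
    mul_im, ← ofReal_neg, exp_ofReal_mul_I_re, exp_ofReal_mul_I_im, Real.cos_neg, Real.sin_neg]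
  ring

theorem re_exp_neg_mul_I_mul (θ : ℝ) (s : ℂ) :
    (exp (-(θ : ℂ) * I) * s).re = ‖s‖ * Real.cos (arg s - θ) := by
  rw [Real.cos_sub, mul_add, ← mul_assoc, ← mul_assoc, norm_mul_sin_arg, norm_mul_cos_arg,
    mul_re, ← ofReal_neg, exp_ofReal_mul_I_re, exp_ofReal_mul_I_im, Real.cos_neg, Real.sin_neg]
  ring

theorem arg_mem_Icc_iff_im_exp_neg_mul_I_mul {a b : ℝ} (ha : 0 ≤ a) (hab : a < b) (hb : b ≤ π)
    {s : ℂ} (hs : s ≠ 0) :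
    arg s ∈ Icc a b ↔ 0 ≤ (exp (-(a : ℂ) * I) * s).im ∧ (exp (-(b : ℂ) * I) * s).im ≤ 0 := by
  have hnorm : 0 < ‖s‖ := norm_pos_iff.mpr hs
  have hlo := neg_pi_lt_arg s
  have hhi := arg_le_pi s
  rw [im_exp_neg_mul_I_mul, im_exp_neg_mul_I_mul, mul_nonneg_iff_of_pos_left hnorm,
    ← neg_nonneg, ← mul_neg, mul_nonneg_iff_of_pos_left hnorm, neg_nonneg]
  constructor
  · rintro ⟨h₁, h₂⟩
    exact ⟨Real.sin_nonneg_of_nonneg_of_le_pi (by linarith) (by linarith),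
      Real.sin_nonpos_of_nonpos_of_neg_pi_le (by linarith) (by linarith)⟩
  · rintro ⟨h₁, h₂⟩
    refine ⟨?_, ?_⟩
    · by_contra! h
      rcases lt_or_ge (-π) (arg s - a) with h' | h'
      · exact (Real.sin_neg_of_neg_of_neg_pi_lt (by linarith) h').not_ge h₁
      · have := Real.sin_pos_of_pos_of_lt_pi (x := arg s - b + 2 * π) (by linarith) (by linarith)
        rw [Real.sin_add_two_pi] at this
        linarith
    · by_contra! h
      exact (Real.sin_pos_of_pos_of_lt_pi (by linarith) (by linarith)).not_ge h₂

theorem exp_mul_I_pow (x : ℝ) (d : ℕ) : exp (x * I) ^ d = exp ((d * x : ℝ) * I) := by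
  rw [← exp_nat_mul]
  push_cast
  ring_nf

theorem pow_eq_norm_mul_exp (s : ℂ) (d : ℕ) :
    s ^ d = ‖s ^ d‖ * exp ((d * arg s : ℝ) * I) := by
  conv_lhs => rw [← norm_mul_exp_arg_mul_I s]
  rw [mul_pow, exp_mul_I_pow, norm_pow, ofReal_pow]

theorem isLinearMap_im_mul (c : ℂ) : IsLinearMap ℝ fun s : ℂ => (c * s).im :=
  ⟨fun x y => by simp [mul_add], fun r x => by simp; ring⟩

theorem isLinearMap_re_mul (c : ℂ) : IsLinearMap ℝ fun s : ℂ => (c * s).re :=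
  ⟨fun x y => by simp [mul_add], fun r x => by simp; ring⟩

end Complex

theorem ContractingWith.lipschitzWith_fixedPoint {P X : Type*} [PseudoMetricSpace P] [MetricSpace X]
    [Nonempty X] [CompleteSpace X] {K L : ℝ≥0} {F : P → X → X} (hF : ∀ p, ContractingWith K (F p))
    (hL : ∀ x, LipschitzWith L fun p => F p x) :
    LipschitzWith (L / (1 - K)) fun p => ContractingWith.fixedPoint (F p) (hF p) :=
  LipschitzWith.of_dist_le_mul fun p q => by
    have := (hF p).fixedPoint_lipschitz_in_map (hF q) fun x => (hL x).dist_le_mul p q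
    rwa [NNReal.coe_div, NNReal.coe_sub (hF p).1.le, NNReal.coe_one, div_mul_eq_mul_div]

section Segment

variable {γ : ℝ} {s : ℂ}

theorem sq_sub_mul_add_sq_le_norm_add_sq {x : ℝ} (hx : 0 ≤ x) {t : ℂ} (ht : -(‖t‖ / 2) ≤ t.re) :
    x ^ 2 - x * ‖t‖ + ‖t‖ ^ 2 ≤ ‖(x : ℂ) + t‖ ^ 2 := by
  have h : ‖(x : ℂ) + t‖ ^ 2 = x ^ 2 + 2 * x * t.re + ‖t‖ ^ 2 := by
    rw [Complex.sq_norm, Complex.sq_norm, normSq_apply, normSq_apply]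
    simp only [add_re, add_im, ofReal_re, ofReal_im]
    ring
  nlinarith

theorem one_add_mul_sub_one_eq (γ : ℝ) (s : ℂ) : 1 + γ * (s - 1) = ((1 - γ : ℝ) : ℂ) + γ * s := by
  push_cast
  ring

theorem norm_one_add_mul_sub_one_le_one (hγ : γ ∈ Icc (0 : ℝ) 1) (hs : ‖s‖ ≤ 1) :
    ‖1 + γ * (s - 1)‖ ≤ 1 := by
  rw [one_add_mul_sub_one_eq]
  refine (norm_add_le _ _).trans ?_
  rw [norm_mul, norm_real, norm_real, Real.norm_of_nonneg hγ.1,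
    Real.norm_of_nonneg (by linarith [hγ.2])]
  nlinarith [hγ.1]

theorem sq_sub_mul_add_sq_le_norm_one_add_mul_sub_one_sq (hγ : γ ∈ Icc (0 : ℝ) 1)
    (hre : -(‖s‖ / 2) ≤ s.re) :
    (1 - γ) ^ 2 - (1 - γ) * (γ * ‖s‖) + (γ * ‖s‖) ^ 2 ≤ ‖1 + γ * (s - 1)‖ ^ 2 := by
  have hnorm : ‖(γ : ℂ) * s‖ = γ * ‖s‖ := by rw [norm_mul, norm_real, Real.norm_of_nonneg hγ.1]
  rw [one_add_mul_sub_one_eq, ← hnorm]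
  refine sq_sub_mul_add_sq_le_norm_add_sq (by linarith [hγ.2]) ?_
  rw [hnorm, re_ofReal_mul]
  nlinarith [hγ.1]

theorem one_quarter_le_norm_one_add_mul_sub_one (hγ : γ ∈ Icc (0 : ℝ) 1) (hs : 1 / 2 ≤ ‖s‖)
    (hre : -(‖s‖ / 2) ≤ s.re) : 1 / 4 ≤ ‖1 + γ * (s - 1)‖ := by
  have h := sq_sub_mul_add_sq_le_norm_one_add_mul_sub_one_sq hγ hre
  have : γ / 2 ≤ γ * ‖s‖ := by nlinarith [hγ.1]
  nlinarith [sq_nonneg (1 - γ - γ * ‖s‖), norm_nonneg (1 + γ * (s - 1)), hγ.1, hγ.2]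

theorem three_mul_sq_le_norm_one_add_mul_sub_one_sq (hγ : γ ∈ Icc (0 : ℝ) 1) (hs : 1 / 2 ≤ ‖s‖)
    (hre : -(‖s‖ / 2) ≤ s.re) : 3 * γ ^ 2 ≤ 16 * ‖1 + γ * (s - 1)‖ ^ 2 := by
  have h := sq_sub_mul_add_sq_le_norm_one_add_mul_sub_one_sq hγ hre
  have : γ / 2 ≤ γ * ‖s‖ := by nlinarith [hγ.1]
  nlinarith [sq_nonneg (1 - γ - γ * ‖s‖ / 2), hγ.1]

theorem arg_one_add_mul_sub_one_mem_Icc {b : ℝ} (hb : 0 < b) (hbπ : b ≤ π)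
    (hγ : γ ∈ Icc (0 : ℝ) 1) (hs : s ≠ 0) (harg : arg s ∈ Icc 0 b) (hz : 1 + γ * (s - 1) ≠ 0) :
    arg (1 + γ * (s - 1)) ∈ Icc 0 b := by
  rw [arg_mem_Icc_iff_im_exp_neg_mul_I_mul le_rfl hb hbπ hs] at harg
  rw [arg_mem_Icc_iff_im_exp_neg_mul_I_mul le_rfl hb hbπ hz, one_add_mul_sub_one_eq]
  simp only [ofReal_zero, neg_zero, zero_mul, exp_zero, one_mul] at harg ⊢
  obtain ⟨him, hrot⟩ := harg
  have hsin := Real.sin_nonneg_of_nonneg_of_le_pi hb.le hbπ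
  constructor
  · rw [add_im, ofReal_im, im_ofReal_mul]
    nlinarith [hγ.1]
  · rw [mul_add, mul_comm _ ((1 - γ : ℝ) : ℂ), mul_left_comm, add_im, im_ofReal_mul,
      im_ofReal_mul, ← ofReal_neg, exp_ofReal_mul_I_im, Real.sin_neg, ofReal_neg]
    nlinarith [hγ.1, hγ.2]

end Segment

noncomputable def startAngle (m : ℕ) : ℝ := 2 * π / m

noncomputable def endAngle (m : ℕ) : ℝ := 2 * π / (m - 1)

noncomputable def midAngle (m : ℕ) : ℝ := (startAngle m + endAngle m) / 2

section Angles

variable {m : ℕ}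

theorem natCast_mul_startAngle (hm : m ≠ 0) : m * startAngle m = 2 * π := by
  have : (m : ℝ) ≠ 0 := by exact_mod_cast hm
  rw [startAngle]
  field_simp

theorem startAngle_add_endAngle_div (hm : 2 ≤ m) : startAngle m + endAngle m / m = endAngle m := by
  have : (2 : ℝ) ≤ m := by exact_mod_cast hm
  have : (m : ℝ) - 1 ≠ 0 := by linarith
  have : (m : ℝ) ≠ 0 := by linarith
  rw [startAngle, endAngle]
  field_simp
  ring

theorem startAngle_pos (hm : m ≠ 0) : 0 < startAngle m := by
  have : (0 : ℝ) < m := by exact_mod_cast Nat.pos_of_ne_zero hm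
  unfold startAngle
  positivity

theorem endAngle_pos (hm : 2 ≤ m) : 0 < endAngle m := by
  have : (2 : ℝ) ≤ m := by exact_mod_cast hm
  exact div_pos (by positivity) (by linarith)

theorem startAngle_lt_endAngle (hm : 2 ≤ m) : startAngle m < endAngle m := by
  have : (0 : ℝ) < m := by exact_mod_cast (by omega : 0 < m)
  linarith [startAngle_add_endAngle_div hm, div_pos (endAngle_pos hm) this]

theorem endAngle_le_pi (hm : 3 ≤ m) : endAngle m ≤ π := by
  have : (3 : ℝ) ≤ m := by exact_mod_cast hm
  rw [endAngle, div_le_iff₀ (by linarith)]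
  nlinarith [Real.pi_pos]

theorem endAngle_le (hm : 4 ≤ m) : endAngle m ≤ 2 * π / 3 := by
  have : (4 : ℝ) ≤ m := by exact_mod_cast hm
  unfold endAngle
  gcongr
  linarith

theorem abs_sub_midAngle_le (hm : 4 ≤ m) {x : ℝ} (hx : x ∈ Icc (startAngle m) (endAngle m)) :
    |x - midAngle m| ≤ π / 4 := by
  have hsum := startAngle_add_endAngle_div (m := m) (by omega)
  have hend := endAngle_le hm
  have : endAngle m / m ≤ endAngle m / 4 := by
    have : (4 : ℝ) ≤ m := by exact_mod_cast hm
    have := endAngle_pos (m := m) (by omega)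
    gcongr
  rw [abs_le, midAngle]
  constructor <;> linarith [hx.1, hx.2, Real.pi_pos]

theorem half_le_mul_cos_sub_midAngle (hm : 4 ≤ m) {x r : ℝ}
    (hx : x ∈ Icc (startAngle m) (endAngle m)) (hr : 0 ≤ r) (hr2 : 1 / 2 ≤ r ^ 2) :
    1 / 2 ≤ r * Real.cos (x - midAngle m) := by
  have hcos : √2 / 2 ≤ Real.cos (x - midAngle m) := by
    rw [← Real.cos_abs, ← Real.cos_pi_div_four]
    exact Real.cos_le_cos_of_nonneg_of_le_pi (abs_nonneg _) (by linarith [Real.pi_pos])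
      (abs_sub_midAngle_le hm hx)
  have hsqrt : √2 ^ 2 = 2 := Real.sq_sqrt (by norm_num)
  have : 1 / 4 ≤ (r * Real.cos (x - midAngle m)) ^ 2 := by
    rw [mul_pow]
    nlinarith [pow_le_pow_left₀ (by positivity) hcos 2]
  have : 0 ≤ r * Real.cos (x - midAngle m) :=
    mul_nonneg hr ((by positivity : (0 : ℝ) ≤ √2 / 2).trans hcos)
  nlinarith

theorem natCast_mul_startAngle_of_eq_mul {d k : ℕ} (hd : d ≠ 0) (hk : k ≠ 0) (hmk : m = d * k) :
    (d : ℝ) * startAngle m = 2 * π / k := by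
  have : (d : ℝ) ≠ 0 := by exact_mod_cast hd
  have : (k : ℝ) ≠ 0 := by exact_mod_cast hk
  rw [startAngle, hmk]
  push_cast
  field_simp

end Angles

-- A convex stand-in for the annular sector `1/2 ≤ ‖s‖ ≤ 1`, `2π/m ≤ arg s ≤ 2π/(m-1)`.
def rootRegion (m : ℕ) : Set ℂ :=
  {s | 0 ≤ (exp (-(startAngle m : ℂ) * I) * s).im} ∩
    {s | (exp (-(endAngle m : ℂ) * I) * s).im ≤ 0} ∩
    {s | 1 / 2 ≤ (exp (-(midAngle m : ℂ) * I) * s).re} ∩ Metric.closedBall 0 1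

section RootRegion

variable {m : ℕ} {γ : ℝ} {s : ℂ}

theorem isClosed_rootRegion : IsClosed (rootRegion m) :=
  (((isClosed_le continuous_const (by fun_prop)).inter
    (isClosed_le (by fun_prop) continuous_const)).inter
    (isClosed_le continuous_const (by fun_prop))).inter Metric.isClosed_closedBall

theorem convex_rootRegion : Convex ℝ (rootRegion m) :=
  (((convex_halfSpace_ge (isLinearMap_im_mul _) 0).inter
    (convex_halfSpace_le (isLinearMap_im_mul _) 0)).inter
    (convex_halfSpace_ge (isLinearMap_re_mul _) _)).inter (convex_closedBall 0 1)

theorem mem_rootRegion_iff (hm : 4 ≤ m) :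
    s ∈ rootRegion m ↔ s ≠ 0 ∧ arg s ∈ Icc (startAngle m) (endAngle m) ∧
      1 / 2 ≤ ‖s‖ * Real.cos (arg s - midAngle m) ∧ ‖s‖ ≤ 1 := by
  have hsector {s : ℂ} (hs : s ≠ 0) := arg_mem_Icc_iff_im_exp_neg_mul_I_mul
    (startAngle_pos (m := m) (by omega)).le (startAngle_lt_endAngle (by omega))
    (endAngle_le_pi (by omega)) hs
  simp only [rootRegion, mem_inter_iff, mem_ofPred_eq, Metric.mem_closedBall, dist_zero_right,
    re_exp_neg_mul_I_mul]
  constructor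
  · rintro ⟨⟨⟨h₁, h₂⟩, h₃⟩, h₄⟩
    have hs : s ≠ 0 := by rintro rfl; norm_num at h₃
    exact ⟨hs, (hsector hs).2 ⟨h₁, h₂⟩, h₃, h₄⟩
  · rintro ⟨hs, harg, h₃, h₄⟩
    exact ⟨⟨(hsector hs).1 harg, h₃⟩, h₄⟩

theorem exp_mul_I_mem_rootRegion (hm : 4 ≤ m) {β : ℝ} (hβ : β ∈ Icc (startAngle m) (endAngle m)) :
    exp (β * I) ∈ rootRegion m := by
  have harg : arg (exp (β * I)) = β := by
    rw [← log_im, log_exp] <;> simp <;>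
      linarith [hβ.1, hβ.2, startAngle_pos (m := m) (by omega), endAngle_le hm, Real.pi_pos]
  rw [mem_rootRegion_iff hm, harg, norm_exp_ofReal_mul_I]
  exact ⟨exp_ne_zero _, hβ, half_le_mul_cos_sub_midAngle hm hβ zero_le_one (by norm_num), le_rfl⟩

theorem one_half_le_norm_of_mem_rootRegion (hm : 4 ≤ m) (hs : s ∈ rootRegion m) :
    1 / 2 ≤ ‖s‖ := by
  obtain ⟨-, -, h, -⟩ := (mem_rootRegion_iff hm).1 hs
  nlinarith [Real.cos_le_one (arg s - midAngle m), norm_nonneg s]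

theorem neg_norm_div_two_le_re_of_mem_rootRegion (hm : 4 ≤ m) (hs : s ∈ rootRegion m) :
    -(‖s‖ / 2) ≤ s.re := by
  obtain ⟨-, harg, -⟩ := (mem_rootRegion_iff hm).1 hs
  have hcos : Real.cos (2 * π / 3) ≤ Real.cos (arg s) :=
    Real.cos_le_cos_of_nonneg_of_le_pi ((startAngle_pos (by omega)).le.trans harg.1)
      (by linarith [Real.pi_pos]) (harg.2.trans (endAngle_le hm))
  have : Real.cos (2 * π / 3) = -(1 / 2) := by
    rw [show 2 * π / 3 = π - π / 3 by ring, Real.cos_pi_sub, Real.cos_pi_div_three]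
  rw [← norm_mul_cos_arg]
  nlinarith [norm_nonneg s]

theorem one_quarter_le_norm_of_mem_rootRegion (hm : 4 ≤ m) (hγ : γ ∈ Icc (0 : ℝ) 1)
    (hs : s ∈ rootRegion m) : 1 / 4 ≤ ‖1 + γ * (s - 1)‖ :=
  one_quarter_le_norm_one_add_mul_sub_one hγ (one_half_le_norm_of_mem_rootRegion hm hs)
    (neg_norm_div_two_le_re_of_mem_rootRegion hm hs)

theorem one_add_mul_sub_one_ne_zero (hm : 4 ≤ m) (hγ : γ ∈ Icc (0 : ℝ) 1)
    (hs : s ∈ rootRegion m) : 1 + γ * (s - 1) ≠ 0 :=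
  norm_pos_iff.1 (by linarith [one_quarter_le_norm_of_mem_rootRegion hm hγ hs])

theorem arg_one_add_mul_sub_one_mem_Icc_of_mem_rootRegion (hm : 4 ≤ m) (hγ : γ ∈ Icc (0 : ℝ) 1)
    (hs : s ∈ rootRegion m) : arg (1 + γ * (s - 1)) ∈ Icc 0 (endAngle m) := by
  obtain ⟨hs0, harg, -⟩ := (mem_rootRegion_iff hm).1 hs
  exact arg_one_add_mul_sub_one_mem_Icc (endAngle_pos (by omega)) (endAngle_le_pi (by omega)) hγ
    hs0 ⟨(startAngle_pos (by omega)).le.trans harg.1, harg.2⟩ (one_add_mul_sub_one_ne_zero hm hγ hs)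

theorem one_add_mul_sub_one_mem_slitPlane (hm : 4 ≤ m) (hγ : γ ∈ Icc (0 : ℝ) 1)
    (hs : s ∈ rootRegion m) : 1 + γ * (s - 1) ∈ slitPlane :=
  mem_slitPlane_iff_arg.2
    ⟨((arg_one_add_mul_sub_one_mem_Icc_of_mem_rootRegion hm hγ hs).2.trans_lt
      ((endAngle_le hm).trans_lt (by linarith [Real.pi_pos]))).ne,
    one_add_mul_sub_one_ne_zero hm hγ hs⟩

end RootRegion

noncomputable def rootMap (m : ℕ) (γ : ℝ) (s : ℂ) : ℂ :=
  exp (startAngle m * I + log (1 + γ * (s - 1)) / m)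

section RootMap

variable {m : ℕ} {γ : ℝ} {s : ℂ}

theorem rootMap_pow (hm : m ≠ 0) (hz : 1 + γ * (s - 1) ≠ 0) :
    rootMap m γ s ^ m = 1 + γ * (s - 1) := by
  have hmul : (m : ℂ) * startAngle m = 2 * π := by exact_mod_cast natCast_mul_startAngle hm
  rw [rootMap, ← exp_nat_mul, mul_add, mul_div_cancel₀ _ (Nat.cast_ne_zero.2 hm), ← mul_assoc,
    hmul, exp_add, exp_two_pi_mul_I, one_mul, exp_log hz]

theorem arg_rootMap_mem_Icc (hm : 3 ≤ m) (harg : arg (1 + γ * (s - 1)) ∈ Icc 0 (endAngle m)) :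
    arg (rootMap m γ s) ∈ Icc (startAngle m) (endAngle m) := by
  have hmpos : (0 : ℝ) < m := by exact_mod_cast (by omega : 0 < m)
  have him : (startAngle m * I + log (1 + γ * (s - 1)) / m).im =
      startAngle m + arg (1 + γ * (s - 1)) / m := by
    simp [log_im]
  have hlo : 0 ≤ arg (1 + γ * (s - 1)) / m := div_nonneg harg.1 hmpos.le
  have hhi : arg (1 + γ * (s - 1)) / m ≤ endAngle m / m := by gcongr; exact harg.2
  have hsum := startAngle_add_endAngle_div (m := m) (by omega)
  have hend := endAngle_le_pi hm
  rw [rootMap, ← log_im, log_exp] <;> rw [him]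
  · constructor <;> linarith
  · linarith [startAngle_pos (m := m) (by omega), Real.pi_pos]
  · linarith

theorem norm_rootMap_pow (hm : 4 ≤ m) (hγ : γ ∈ Icc (0 : ℝ) 1) (hs : s ∈ rootRegion m) :
    ‖rootMap m γ s‖ ^ m = ‖1 + γ * (s - 1)‖ := by
  rw [← norm_pow, rootMap_pow (by omega) (one_add_mul_sub_one_ne_zero hm hγ hs)]

theorem norm_rootMap_le_one (hm : 4 ≤ m) (hγ : γ ∈ Icc (0 : ℝ) 1) (hs : s ∈ rootRegion m) :
    ‖rootMap m γ s‖ ≤ 1 :=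
  (pow_le_one_iff_of_nonneg (norm_nonneg _) (by omega)).1
    (norm_rootMap_pow hm hγ hs ▸
      norm_one_add_mul_sub_one_le_one hγ ((mem_rootRegion_iff hm).1 hs).2.2.2)

theorem rootMap_mem_rootRegion (hm : 4 ≤ m) (hγ : γ ∈ Icc (0 : ℝ) 1) (hs : s ∈ rootRegion m) :
    rootMap m γ s ∈ rootRegion m := by
  have hle := norm_rootMap_le_one hm hγ hs
  have hsq : 1 / 2 ≤ ‖rootMap m γ s‖ ^ 2 := by
    have := pow_le_pow_of_le_one (norm_nonneg _) hle hm
    nlinarith [norm_rootMap_pow hm hγ hs, one_quarter_le_norm_of_mem_rootRegion hm hγ hs,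
      sq_nonneg (‖rootMap m γ s‖ ^ 2)]
  have hargT := arg_rootMap_mem_Icc (by omega)
    (arg_one_add_mul_sub_one_mem_Icc_of_mem_rootRegion hm hγ hs)
  rw [mem_rootRegion_iff hm]
  exact ⟨exp_ne_zero _, hargT, half_le_mul_cos_sub_midAngle hm hargT (norm_nonneg _) hsq, hle⟩

end RootMap

section Lipschitz

variable {m : ℕ} {γ : ℝ} {s : ℂ}

theorem hasDerivAt_rootMap (hz : 1 + γ * (s - 1) ∈ slitPlane) :
    HasDerivAt (rootMap m γ) (rootMap m γ s * (γ / ((1 + γ * (s - 1)) * m))) s := by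
  have hlin : HasDerivAt (fun u : ℂ => 1 + γ * (u - 1)) γ s := by
    simpa using (((hasDerivAt_id s).sub_const 1).const_mul (γ : ℂ)).const_add 1
  refine ((((hasDerivAt_log hz).comp s hlin).div_const (m : ℂ)).const_add
    (startAngle m * I : ℂ)).cexp.congr_deriv ?_
  rw [Function.comp_apply, inv_mul_eq_div, div_div]
  rfl

theorem hasDerivAt_rootMap_param (hz : 1 + γ * (s - 1) ∈ slitPlane) :
    HasDerivAt (fun t : ℝ => rootMap m t s)
      (rootMap m γ s * ((s - 1) / ((1 + γ * (s - 1)) * m))) γ := by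
  have hlin : HasDerivAt (fun u : ℂ => 1 + u * (s - 1)) (s - 1) γ := by
    simpa using ((hasDerivAt_id (γ : ℂ)).mul_const (s - 1)).const_add 1
  refine (((((hasDerivAt_log hz).comp (γ : ℂ) hlin).div_const (m : ℂ)).const_add
    (startAngle m * I : ℂ)).cexp.comp_ofReal).congr_deriv ?_
  rw [Function.comp_apply, inv_mul_eq_div, div_div]
  rfl

theorem dist_rootMap_le (hm : 4 ≤ m) (hγ : γ ∈ Icc (0 : ℝ) 1) {x y : ℂ} (hx : x ∈ rootRegion m)
    (hy : y ∈ rootRegion m) : dist (rootMap m γ x) (rootMap m γ y) ≤ 3 / 5 * dist x y := by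
  have hmR : (4 : ℝ) ≤ m := by exact_mod_cast hm
  have hbound : ∀ u ∈ rootRegion m, ‖rootMap m γ u * (γ / ((1 + γ * (u - 1)) * m))‖ ≤ 3 / 5 := by
    intro u hu
    have hT := norm_rootMap_le_one hm hγ hu
    have hz := one_quarter_le_norm_of_mem_rootRegion hm hγ hu
    have hsq := three_mul_sq_le_norm_one_add_mul_sub_one_sq hγ
      (one_half_le_norm_of_mem_rootRegion hm hu) (neg_norm_div_two_le_re_of_mem_rootRegion hm hu)
    have hγz : γ ≤ 12 / 5 * ‖1 + γ * (u - 1)‖ := by nlinarith [hγ.1]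
    rw [norm_mul, norm_div, norm_mul, norm_real, Real.norm_of_nonneg hγ.1, norm_natCast,
      ← mul_div_assoc, div_le_iff₀ (by positivity)]
    nlinarith [mul_le_of_le_one_left hγ.1 hT]
  rw [dist_eq_norm, dist_eq_norm]
  exact convex_rootRegion.norm_image_sub_le_of_norm_hasDerivWithin_le
    (fun u hu => (hasDerivAt_rootMap (one_add_mul_sub_one_mem_slitPlane hm hγ hu)).hasDerivWithinAt)
    hbound hy hx

theorem dist_rootMap_param_le (hm : 4 ≤ m) (hs : s ∈ rootRegion m) {γ₁ γ₂ : ℝ}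
    (h₁ : γ₁ ∈ Icc (0 : ℝ) 1) (h₂ : γ₂ ∈ Icc (0 : ℝ) 1) :
    dist (rootMap m γ₁ s) (rootMap m γ₂ s) ≤ 2 * dist γ₁ γ₂ := by
  have hmR : (4 : ℝ) ≤ m := by exact_mod_cast hm
  have hs1 : ‖s - 1‖ ≤ 2 := by
    linarith [norm_sub_le s 1, (norm_one : ‖(1 : ℂ)‖ = 1), ((mem_rootRegion_iff hm).1 hs).2.2.2]
  have hbound : ∀ t ∈ Icc (0 : ℝ) 1,
      ‖rootMap m t s * ((s - 1) / ((1 + t * (s - 1)) * m))‖ ≤ 2 := by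
    intro t ht
    have hT := norm_rootMap_le_one hm ht hs
    have hz := one_quarter_le_norm_of_mem_rootRegion hm ht hs
    rw [norm_mul, norm_div, norm_mul, norm_natCast, ← mul_div_assoc, div_le_iff₀ (by positivity)]
    nlinarith [mul_le_of_le_one_left (norm_nonneg (s - 1)) hT]
  rw [dist_eq_norm, dist_eq_norm]
  exact (convex_Icc 0 1).norm_image_sub_le_of_norm_hasDerivWithin_le
    (f := fun t : ℝ => rootMap m t s)
    (fun t ht =>
      (hasDerivAt_rootMap_param (one_add_mul_sub_one_mem_slitPlane hm ht hs)).hasDerivWithinAt)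
    hbound h₂ h₁

end Lipschitz

section RootArc

variable {m : ℕ}

theorem rootMap_zero (s : ℂ) : rootMap m 0 s = exp (startAngle m * I) := by
  simp [rootMap]

theorem rootMap_one_exp_endAngle (hm : 3 ≤ m) :
    rootMap m 1 (exp (endAngle m * I)) = exp (endAngle m * I) := by
  have hlog : log (exp (endAngle m * I)) = endAngle m * I := by
    rw [log_exp] <;> simp <;> linarith [endAngle_pos (m := m) (by omega), endAngle_le_pi hm,
      Real.pi_pos]
  have hsum : (startAngle m + endAngle m / m : ℂ) = endAngle m := by
    exact_mod_cast startAngle_add_endAngle_div (m := m) (by omega)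
  rw [rootMap, ofReal_one, one_mul, add_sub_cancel, hlog]
  congr 1
  linear_combination I * hsum

theorem pow_eq_of_rootMap_eq (hm : 4 ≤ m) {γ : ℝ} (hγ : γ ∈ Icc (0 : ℝ) 1) {s : ℂ}
    (hs : s ∈ rootRegion m) (hfix : rootMap m γ s = s) : s ^ m = 1 + γ * (s - 1) := by
  conv_lhs => rw [← hfix]
  exact rootMap_pow (by omega) (one_add_mul_sub_one_ne_zero hm hγ hs)

theorem exists_continuous_fixedPoint_rootMap (hm : 4 ≤ m) :
    ∃ S : Icc (0 : ℝ) 1 → ℂ, Continuous S ∧ ∀ γ, S γ ∈ rootRegion m ∧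
      rootMap m γ (S γ) = S γ ∧ ∀ s ∈ rootRegion m, rootMap m γ s = s → S γ = s := by
  have : CompleteSpace (rootRegion m) := isClosed_rootRegion.completeSpace_coe
  have : Nonempty (rootRegion m) :=
    ⟨⟨_, exp_mul_I_mem_rootRegion hm ⟨le_rfl, (startAngle_lt_endAngle (by omega)).le⟩⟩⟩
  let F (γ : Icc (0 : ℝ) 1) (s : rootRegion m) : rootRegion m :=
    ⟨rootMap m γ s, rootMap_mem_rootRegion hm γ.2 s.2⟩
  have hF (γ : Icc (0 : ℝ) 1) : ContractingWith (3 / 5) (F γ) :=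
    ⟨by rw [← NNReal.coe_lt_coe]; norm_num, LipschitzWith.of_dist_le_mul fun x y => by
      simpa [Subtype.dist_eq, F] using dist_rootMap_le hm γ.2 x.2 y.2⟩
  have hL (s : rootRegion m) : LipschitzWith 2 fun γ => F γ s :=
    LipschitzWith.of_dist_le_mul fun γ₁ γ₂ => by
      simpa [Subtype.dist_eq, F] using dist_rootMap_param_le hm s.2 γ₁.2 γ₂.2
  refine ⟨fun γ => (ContractingWith.fixedPoint (F γ) (hF γ) : rootRegion m),
    continuous_subtype_val.comp (ContractingWith.lipschitzWith_fixedPoint hF hL).continuous,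
    fun γ => ⟨Subtype.prop _, congrArg Subtype.val (hF γ).fixedPoint_isFixedPt,
      fun s hs h => ?_⟩⟩
  exact congrArg Subtype.val ((hF γ).fixedPoint_unique (x := ⟨s, hs⟩) (Subtype.ext h)).symm

theorem exists_continuous_rootArc (hm : 4 ≤ m) :
    ∃ σ : ℝ → ℂ, Continuous σ ∧ σ 0 = exp (startAngle m * I) ∧ σ 1 = exp (endAngle m * I) ∧
      ∀ γ ∈ Icc (0 : ℝ) 1, σ γ ∈ rootRegion m ∧ σ γ ^ m = 1 + γ * (σ γ - 1) := by
  obtain ⟨S, hS, hSγ⟩ := exists_continuous_fixedPoint_rootMap hm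
  refine ⟨fun γ => S (projIcc 0 1 zero_le_one γ), hS.comp continuous_projIcc, ?_, ?_,
    fun γ hγ => ?_⟩
  · simp only [projIcc_left]
    exact (hSγ _).2.2 _ (exp_mul_I_mem_rootRegion hm
      ⟨le_rfl, (startAngle_lt_endAngle (by omega)).le⟩) (rootMap_zero _)
  · simp only [projIcc_right]
    exact (hSγ _).2.2 _ (exp_mul_I_mem_rootRegion hm
      ⟨(startAngle_lt_endAngle (by omega)).le, le_rfl⟩) (rootMap_one_exp_endAngle (by omega))
  · simp only [projIcc_of_mem _ hγ]
    obtain ⟨hmem, hfix, -⟩ := hSγ ⟨γ, hγ⟩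
    exact ⟨hmem, pow_eq_of_rootMap_eq hm hγ hmem hfix⟩

end RootArc

theorem power_arc_exists_i_general (d k m : ℕ) (hd : 1 < d) (hdm : d < m)
    (hmk : m = d * k) :
    ∃ μ : ℝ → ℂ, ContinuousOn μ (Set.Icc (0 : ℝ) 1) ∧
      μ 0 = Complex.exp (2 * Real.pi * Complex.I / (k : ℂ)) ∧
      μ 1 = Complex.exp (2 * Real.pi * Complex.I * ((d : ℂ) / ((m : ℂ) - 1))) ∧
      ∀ γ ∈ Set.Icc (0 : ℝ) 1,
        ((μ γ ^ k - ((1 : ℂ) - (γ : ℂ))) ^ d = (γ : ℂ) ^ d * μ γ ∧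
          μ γ ≠ 0 ∧
          ∃ θ : ℝ, μ γ = (‖μ γ‖ : ℂ) * Complex.exp (θ * Complex.I) ∧
            2 * Real.pi / (k : ℝ) ≤ θ ∧ θ ≤ 2 * Real.pi * ((d : ℝ) / ((m : ℝ) - 1))) := by
  have hk : 2 ≤ k := by
    by_contra! h
    interval_cases k <;> omega
  have hm : 4 ≤ m := hmk ▸ Nat.mul_le_mul hd hk
  have hstart := natCast_mul_startAngle_of_eq_mul (by omega) (by omega) hmk
  have hend : (d : ℝ) * endAngle m = 2 * π * (d / (m - 1)) := by
    rw [endAngle]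
    ring
  obtain ⟨σ, hσ, hσ₀, hσ₁, hσγ⟩ := exists_continuous_rootArc hm
  refine ⟨fun γ => σ γ ^ d, (hσ.pow d).continuousOn, ?_, ?_, fun γ hγ => ?_⟩
  · simp only [hσ₀, exp_mul_I_pow, hstart]
    push_cast
    ring_nf
  · simp only [hσ₁, exp_mul_I_pow, hend]
    push_cast
    ring_nf
  obtain ⟨hmem, hpow⟩ := hσγ γ hγ
  obtain ⟨hne, harg, -⟩ := (mem_rootRegion_iff hm).1 hmem
  refine ⟨?_, pow_ne_zero d hne, d * arg (σ γ), pow_eq_norm_mul_exp _ _, ?_, ?_⟩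
  · rw [← pow_mul, ← hmk, hpow, ← mul_pow]
    ring
  · exact hstart ▸ mul_le_mul_of_nonneg_left harg.1 (Nat.cast_nonneg d)
  · exact hend ▸ mul_le_mul_of_nonneg_left harg.2 (Nat.cast_nonneg d)

/-- Pointwise powers of Type I arcs, case `m = dk`: there is a continuous path of
zeros of the reduced Ito equation `(t^k − (1−γ))^d = γ^d t` joining `e^{2πi/k}` to
`e^{2πi d/(m−1)}` and staying in the corresponding sector. -/
theorem power_arc_exists_i (d k m n : ℕ) (hd : 1 < d) (hdm : d < m) (hmn : m ≤ n)
    (hmk : m = d * k) (hn : (n : ℤ) < (m : ℤ) + (k : ℤ) - 1) :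
    ∃ μ : ℝ → ℂ, ContinuousOn μ (Set.Icc (0 : ℝ) 1) ∧
      μ 0 = Complex.exp (2 * Real.pi * Complex.I / (k : ℂ)) ∧
      μ 1 = Complex.exp (2 * Real.pi * Complex.I * ((d : ℂ) / ((m : ℂ) - 1))) ∧
      ∀ γ ∈ Set.Icc (0 : ℝ) 1,
        ((μ γ ^ k - ((1 : ℂ) - (γ : ℂ))) ^ d = (γ : ℂ) ^ d * μ γ ∧
          μ γ ≠ 0 ∧
          ∃ θ : ℝ, μ γ = (‖μ γ‖ : ℂ) * Complex.exp (θ * Complex.I) ∧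
            2 * Real.pi / (k : ℝ) ≤ θ ∧ θ ≤ 2 * Real.pi * ((d : ℝ) / ((m : ℝ) - 1))) :=
  power_arc_exists_i_general d k m hd hdm hmk
end

section
/- Let n be a positive integer. If λ ∈ Θ_n, then for every natural number p the convex hull conv(1, λ, λ², …, λ^p) of the powers λ^0, λ^1, …, λ^p (taken in ℂ regarded as the real plane) is contained in Θ_n. -/
lemma isStochastic_one {n : ℕ} : IsStochastic (1 : Matrix (Fin n) (Fin n) ℝ) := by
  constructor
  · intro i j
    by_cases h : i = j <;> simp [Matrix.one_apply, h]
  · intro i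
    simp [Matrix.one_apply]

lemma isStochastic_mul {n : ℕ} {A B : Matrix (Fin n) (Fin n) ℝ}
    (hA : IsStochastic A) (hB : IsStochastic B) : IsStochastic (A * B) := by
  constructor
  · intro i j
    rw [Matrix.mul_apply]
    exact Finset.sum_nonneg fun k _ => mul_nonneg (hA.1 i k) (hB.1 k j)
  · intro i
    simp only [Matrix.mul_apply]
    rw [Finset.sum_comm]
    calc ∑ k, ∑ j, A i k * B k j = ∑ k, A i k * ∑ j, B k j := by
          simp [Finset.mul_sum]
      _ = 1 := by simp [hB.2, hA.2 i]

lemma isStochastic_pow {n : ℕ} {A : Matrix (Fin n) (Fin n) ℝ}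
    (hA : IsStochastic A) (k : ℕ) : IsStochastic (A ^ k) := by
  induction k with
  | zero => simpa using isStochastic_one
  | succ k ih => rw [pow_succ]; exact isStochastic_mul ih hA

lemma isStochastic_comb {n : ℕ} {A B : Matrix (Fin n) (Fin n) ℝ}
    (hA : IsStochastic A) (hB : IsStochastic B) {a b : ℝ} (ha : 0 ≤ a) (hb : 0 ≤ b)
    (hab : a + b = 1) : IsStochastic (a • A + b • B) := by
  constructor
  · intro i j
    exact add_nonneg (mul_nonneg ha (hA.1 i j)) (mul_nonneg hb (hB.1 i j))
  · intro i
    simp [Finset.sum_add_distrib, ← Finset.mul_sum, hA.2 i, hB.2 i, hab]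

/-- If `λ ∈ Θ_n`, then the convex hull of `1, λ, λ², …, λ^p` is contained in `Θ_n`. -/
theorem convexHull_pow_subset_theta (n : ℕ) (hn : 0 < n) (l : ℂ) (hl : l ∈ Theta n)
    (p : ℕ) : convexHull ℝ {z : ℂ | ∃ i ≤ p, z = l ^ i} ⊆ Theta n := by
  obtain ⟨A, hA, v, hv, hAv⟩ := hl
  set T : Set ℂ := {z | ∃ B : Matrix (Fin n) (Fin n) ℝ, IsStochastic B ∧
    (B.map Complex.ofReal).mulVec v = z • v} with hT
  have hTTheta : T ⊆ Theta n := fun z ⟨B, hB, hBv⟩ => ⟨B, hB, v, hv, hBv⟩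
  have hconv : Convex ℝ T := by
    rintro z ⟨B, hB, hBv⟩ w ⟨C, hC, hCv⟩ a b ha hb hab
    refine ⟨a • B + b • C, isStochastic_comb hB hC ha hb hab, ?_⟩
    have hmap : (a • B + b • C).map Complex.ofReal
        = (a : ℂ) • B.map Complex.ofReal + (b : ℂ) • C.map Complex.ofReal := by
      ext i j
      simp [Matrix.map_apply, Matrix.add_apply, Matrix.smul_apply]
    rw [hmap, Matrix.add_mulVec, Matrix.smul_mulVec, Matrix.smul_mulVec,
      hBv, hCv]
    funext i
    simp [Pi.smul_apply, Complex.real_smul, smul_smul]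
    ring
  refine (convexHull_min ?_ hconv).trans hTTheta
  rintro z ⟨i, hi, rfl⟩
  clear hi
  refine ⟨A ^ i, isStochastic_pow hA i, ?_⟩
  induction i with
  | zero => simp [Matrix.map_one, Matrix.one_mulVec]
  | succ k ih =>
    have hmm : (A ^ (k + 1)).map Complex.ofReal
        = (A.map Complex.ofReal) * (A ^ k).map Complex.ofReal := by
      ext i j
      simp [Matrix.map_apply, Matrix.mul_apply, pow_succ']
    rw [hmm, ← Matrix.mulVec_mulVec, ih, Matrix.mulVec_smul, hAv, smul_smul, ← pow_succ]
end

section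
/- Let n > 3 be an integer. Every point of the topological boundary of Θ_n (as a subset of ℂ) is extremal: if λ lies in the boundary ∂Θ_n and γ > 1 is a real number, then γλ ∉ Θ_n. -/
/-!
It suffices to show `t • Θₙ ⊆ interior Θₙ` for `0 < t < 1`, since `l = γ⁻¹ (γ l)`.

Fix a vector `v ≠ 0`. The eigenvalues `z` with `A v = z v` for some stochastic `A` form a
multiplicative submonoid of `ℂ` that is convex (stochastic matrices form a convex monoid) and
compact (stochastic matrices form a compact set), so its elements have modulus at most `1`. If it
contains some `z ≠ 1`, it also contains `0`, the limit of the Cesàro means of the powers of `z`.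

If `μ ∈ Θₙ` is not real, with eigenvector `v`, this set therefore contains `0, 1, μ, μ²`, and
`t μ = ε |μ|² + (t - 2 ε Re μ) μ + ε μ²` is a combination of `1, μ, μ²` with positive weights of
total less than `1`; as `1, μ` span `ℂ` over `ℝ`, such a point is interior. If `μ` is real, the
same argument runs with the eigenvalue set of a `4`-cycle, which contains `0, ±1, ±i`.
-/

open Finset Complex Matrix Filter Topology

theorem Convex.sum_smul_mem_interior {E ι : Type*} [NormedAddCommGroup E] [NormedSpace ℝ E]
    [FiniteDimensional ℝ E] [Fintype ι] {K : Set E} (hK : Convex ℝ K) (h0 : 0 ∈ K)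
    {p : ι → E} (hpK : ∀ i, p i ∈ K) (hp : Submodule.span ℝ (Set.range p) = ⊤)
    {c : ι → ℝ} (hc : ∀ i, 0 < c i) (hc1 : ∑ i, c i < 1) :
    ∑ i, c i • p i ∈ interior K := by
  set f := Fintype.linearCombination ℝ p
  have hf : Function.Surjective f := by
    rw [← LinearMap.range_eq_top, Fintype.range_linearCombination, hp]
  set O : Set (ι → ℝ) := {c | (∀ i, 0 < c i) ∧ ∑ i, c i < 1}
  have hO : IsOpen O := by
    simp only [O, Set.ofPred_and, Set.ofPred_forall]
    exact (isOpen_iInter_of_finite fun i => isOpen_lt continuous_const (continuous_apply i)).inter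
      (isOpen_lt (continuous_finsetSum _ fun i _ => continuous_apply i) continuous_const)
  have hOK : f '' O ⊆ K := by
    rintro _ ⟨c, ⟨hc, hc1⟩, rfl⟩
    -- the point `0` carries the remaining weight `1 - ∑ i, c i`
    let w (i : Option ι) : ℝ := i.elim (1 - ∑ i, c i) c
    let z (i : Option ι) : E := i.elim 0 p
    have hw : ∀ i ∈ univ, 0 ≤ w i := by
      rintro (_ | i) -
      exacts [sub_nonneg.2 hc1.le, (hc i).le]
    have hz : ∀ i ∈ univ, z i ∈ K := by
      rintro (_ | i) -
      exacts [h0, hpK i]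
    simpa [f, Fintype.linearCombination_apply, w, z, Fintype.sum_option] using
      hK.sum_mem hw (by simp [w, Fintype.sum_option]) hz
  exact interior_maximal hOK (f.isOpenMap_of_finiteDimensional hf O hO)
    ⟨c, ⟨hc, hc1⟩, Fintype.linearCombination_apply ℝ p c⟩

theorem Complex.span_real_eq_top_of_im_ne_zero {S : Set ℂ} {w : ℂ} (h1 : 1 ∈ S) (hw : w ∈ S)
    (him : w.im ≠ 0) : Submodule.span ℝ S = ⊤ := by
  refine Submodule.eq_top_iff'.2 fun z => ?_
  have hz : z = (z.re - z.im * w.re / w.im) • (1 : ℂ) + (z.im / w.im) • w := by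
    apply Complex.ext
    · simp; field_simp; ring
    · simp; field_simp
  rw [hz]
  exact Submodule.add_mem _ (Submodule.smul_mem _ _ (Submodule.subset_span h1))
    (Submodule.smul_mem _ _ (Submodule.subset_span hw))

theorem Convex.ofReal_mem_interior_of_abs_lt_one {K : Set ℂ} (hK : Convex ℝ K) (h0 : 0 ∈ K)
    (h1 : 1 ∈ K) (hI : I ∈ K) (hm1 : -1 ∈ K) (hmI : -I ∈ K) {x : ℝ} (hx : |x| < 1) :
    (x : ℂ) ∈ interior K := by
  set s := (1 + |x|) / 2 with hs
  set δ := (1 - |x|) / 8 with hδ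
  have hp : ∀ i, ![1, I, -1, -I] i ∈ K := by
    intro i; fin_cases i <;> assumption
  have hc : ∀ i, 0 < ![(s + x) / 2, δ, (s - x) / 2, δ] i := by
    have := neg_abs_le x
    have := le_abs_self x
    intro i; fin_cases i <;> (simp; linarith)
  convert hK.sum_smul_mem_interior h0 hp
    (span_real_eq_top_of_im_ne_zero (w := I) (by simp) (by simp) (by simp)) hc
    (by simp [Fin.sum_univ_four]; linarith)
  apply Complex.ext
  · simp [Fin.sum_univ_four]; ring
  · simp [Fin.sum_univ_four]

theorem Convex.ofReal_mul_mem_interior_of_im_ne_zero {K : Set ℂ} (hK : Convex ℝ K)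
    (h0 : 0 ∈ K) (h1 : 1 ∈ K) {μ : ℂ} (hμ : μ ∈ K) (hμ2 : μ ^ 2 ∈ K) (him : μ.im ≠ 0)
    (hμ1 : ‖μ‖ ≤ 1) {t : ℝ} (ht0 : 0 < t) (ht1 : t < 1) : (t : ℂ) * μ ∈ interior K := by
  set ε := t * (1 - t) / 8 with hε_def
  have hε : 0 < ε := by positivity
  have hre : |μ.re| ≤ 1 := (abs_re_le_norm μ).trans hμ1
  have hnormSq : normSq μ ≤ 1 := by rw [normSq_eq_norm_sq]; nlinarith [norm_nonneg μ]
  have hp : ∀ i, ![1, μ, μ ^ 2] i ∈ K := by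
    intro i; fin_cases i <;> assumption
  have hc : ∀ i, 0 < ![ε * normSq μ, t - 2 * ε * μ.re, ε] i := by
    have := (abs_le.1 hre).2
    intro i; fin_cases i <;> simp
    · exact mul_pos hε (normSq_pos.2 fun h => him (by simp [h]))
    · nlinarith [mul_le_mul_of_nonneg_left this hε.le]
    · exact hε
  have hc1 : ∑ i, ![ε * normSq μ, t - 2 * ε * μ.re, ε] i < 1 := by
    have := (abs_le.1 hre).1
    simp [Fin.sum_univ_three]
    nlinarith [mul_le_mul_of_nonneg_left hnormSq hε.le, mul_le_mul_of_nonneg_left this hε.le]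
  -- the terms in `ε` cancel: `|μ|² - 2 Re μ • μ + μ² = 0`
  convert hK.sum_smul_mem_interior h0 hp
    (span_real_eq_top_of_im_ne_zero (w := μ) (by simp) (by simp) him) hc hc1
  apply Complex.ext <;> simp [Fin.sum_univ_three, normSq_apply, sq] <;> ring

theorem norm_geom_sum_le_two_div {𝕜 : Type*} [NormedDivisionRing 𝕜] {z : 𝕜} (hz : ‖z‖ ≤ 1)
    (hz1 : z ≠ 1) (N : ℕ) : ‖∑ m ∈ range N, z ^ m‖ ≤ 2 / ‖z - 1‖ := by
  rw [geom_sum_eq hz1, norm_div]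
  gcongr
  calc ‖z ^ N - 1‖ ≤ ‖z ^ N‖ + ‖(1 : 𝕜)‖ := norm_sub_le _ _
    _ ≤ 1 + 1 := by
      rw [norm_pow, norm_one]; gcongr; exact pow_le_one₀ (norm_nonneg z) hz
    _ = 2 := by norm_num

theorem tendsto_cesaro_geom_sum_nhds_zero {𝕜 : Type*} [NormedField 𝕜] [NormedSpace ℝ 𝕜]
    {z : 𝕜} (hz : ‖z‖ ≤ 1) (hz1 : z ≠ 1) :
    Tendsto (fun N : ℕ => (1 / ((N : ℝ) + 1)) • ∑ m ∈ range (N + 1), z ^ m) atTop (𝓝 0) :=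
  tendsto_one_div_add_atTop_nhds_zero_nat.zero_smul_isBoundedUnder_le
    (isBoundedUnder_of ⟨_, fun N => norm_geom_sum_le_two_div hz hz1 (N + 1)⟩)

section StochasticEigenvalues

variable {ι : Type*} [Fintype ι] [DecidableEq ι]

theorem isCompact_rowStochastic : IsCompact (rowStochastic ℝ ι : Set (Matrix ι ι ℝ)) := by
  refine (isCompact_univ_pi fun _ => isCompact_univ_pi fun _ =>
    isCompact_Icc (a := (0 : ℝ)) (b := 1)).of_isClosed_subset ?_
    fun M hM i _ j _ => ⟨nonneg_of_mem_rowStochastic hM, le_one_of_mem_rowStochastic hM⟩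
  show IsClosed ({M : Matrix ι ι ℝ | ∀ i j, 0 ≤ M i j} ∩ {M | M *ᵥ 1 = 1})
  refine IsClosed.inter ?_ (isClosed_eq (continuous_id.matrix_mulVec continuous_const)
    (continuous_const (y := (1 : ι → ℝ))))
  simp only [Set.ofPred_forall]
  exact isClosed_iInter fun i => isClosed_iInter fun j =>
    isClosed_le continuous_const ((continuous_apply j).comp (continuous_apply i))

def stochasticEigenvalues (v : ι → ℂ) : Submonoid ℂ where
  carrier := {z | ∃ A ∈ rowStochastic ℝ ι, A.map ofReal *ᵥ v = z • v}
  mul_mem' := by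
    rintro z w ⟨A, hA, hAv⟩ ⟨B, hB, hBv⟩
    refine ⟨A * B, mul_mem hA hB, ?_⟩
    have hmap : (A * B).map ofReal = A.map ofReal * B.map ofReal :=
      Matrix.map_mul (f := ofRealHom)
    rw [hmap, ← mulVec_mulVec, hBv, mulVec_smul, hAv, smul_smul, mul_comm]
  one_mem' := ⟨1, one_mem _, by simp⟩

variable {v : ι → ℂ} {z : ℂ}

theorem mem_stochasticEigenvalues :
    z ∈ stochasticEigenvalues v ↔ ∃ A ∈ rowStochastic ℝ ι, A.map ofReal *ᵥ v = z • v :=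
  Iff.rfl

theorem convex_stochasticEigenvalues : Convex ℝ (stochasticEigenvalues v : Set ℂ) := by
  rintro z ⟨A, hA, hAv⟩ w ⟨B, hB, hBv⟩ a b ha hb hab
  refine ⟨a • A + b • B, convex_rowStochastic hA hB ha hb hab, ?_⟩
  have hmap : (a • A + b • B).map ofReal = (a : ℂ) • A.map ofReal + (b : ℂ) • B.map ofReal := by
    ext i j; simp
  rw [hmap, add_mulVec, smul_mulVec, smul_mulVec, hAv, hBv, smul_smul, smul_smul, ← add_smul]
  simp [Complex.real_smul]

theorem isCompact_stochasticEigenvalues (hv : v ≠ 0) :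
    IsCompact (stochasticEigenvalues v : Set ℂ) := by
  obtain ⟨i, hi : v i ≠ 0⟩ := Function.ne_iff.1 hv
  -- on matrices having `v` as an eigenvector, the eigenvalue is read off at a coordinate `v i ≠ 0`
  set g : Matrix ι ι ℝ → ℂ := fun A => (A.map ofReal *ᵥ v) i / v i
  have hAv : Continuous fun A : Matrix ι ι ℝ => A.map ofReal *ᵥ v :=
    (continuous_id.matrix_map continuous_ofReal).matrix_mulVec continuous_const
  have hg : Continuous g := ((continuous_apply i).comp hAv).div_const _
  have hcpt : IsCompact (rowStochastic ℝ ι ∩ {A | A.map ofReal *ᵥ v = g A • v}) :=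
    isCompact_rowStochastic.inter_right (isClosed_eq hAv (hg.smul continuous_const))
  convert hcpt.image hg
  ext z
  constructor
  · rintro ⟨A, hA, hAv⟩
    have hgA : g A = z := by simp [g, hAv, hi]
    exact ⟨A, ⟨hA, by rw [Set.mem_ofPred_eq, hgA]; exact hAv⟩, hgA⟩
  · rintro ⟨A, ⟨hA, hAv⟩, rfl⟩
    exact ⟨A, hA, hAv⟩

theorem norm_le_one_of_mem_stochasticEigenvalues (hv : v ≠ 0)
    (hz : z ∈ stochasticEigenvalues v) : ‖z‖ ≤ 1 := by
  obtain ⟨C, hC⟩ := isBounded_iff_forall_norm_le.1 (isCompact_stochasticEigenvalues hv).isBounded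
  by_contra! h
  obtain ⟨m, hm⟩ := pow_unbounded_of_one_lt C h
  exact (hC _ (pow_mem hz m)).not_gt (norm_pow z m ▸ hm)

theorem zero_mem_stochasticEigenvalues (hv : v ≠ 0) (hz : z ∈ stochasticEigenvalues v)
    (hz1 : z ≠ 1) : 0 ∈ stochasticEigenvalues v := by
  refine (isCompact_stochasticEigenvalues hv).isClosed.mem_of_tendsto
    (tendsto_cesaro_geom_sum_nhds_zero (norm_le_one_of_mem_stochasticEigenvalues hv hz) hz1)
    (Eventually.of_forall fun N => ?_)
  rw [smul_sum]
  exact convex_stochasticEigenvalues.sum_mem (fun _ _ => by positivity)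
    (by simp; field_simp) fun m _ => pow_mem hz m

end StochasticEigenvalues

section Theta

variable {n : ℕ}

theorem mem_theta_iff {z : ℂ} :
    z ∈ Theta n ↔ ∃ v : Fin n → ℂ, v ≠ 0 ∧ z ∈ stochasticEigenvalues v := by
  simp only [Theta, IsStochastic, ← mem_rowStochastic_iff_sum, mem_stochasticEigenvalues]
  constructor
  · rintro ⟨A, hA, v, hv, hAv⟩
    exact ⟨v, hv, A, hA, hAv⟩
  · rintro ⟨v, hv, A, hA, hAv⟩
    exact ⟨A, hA, v, hv, hAv⟩

theorem stochasticEigenvalues_subset_theta {v : Fin n → ℂ} (hv : v ≠ 0) :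
    (stochasticEigenvalues v : Set ℂ) ⊆ Theta n :=
  fun _ hz => mem_theta_iff.2 ⟨v, hv, hz⟩

theorem exists_I_mem_stochasticEigenvalues (hn : 3 < n) :
    ∃ v : Fin n → ℂ, v ≠ 0 ∧ I ∈ stochasticEigenvalues v := by
  -- the cycle `0 → 1 → 2 → 3 → 0` multiplies `(1, I, -1, -I, 0, …, 0)` by `I`
  set σ := Fin.cycleRange (⟨3, hn⟩ : Fin n)
  set v : Fin n → ℂ := fun j => if (j : ℕ) ≤ 3 then I ^ (j : ℕ) else 0
  refine ⟨v, fun h => by simpa [v] using congrFun h ⟨0, by omega⟩, σ.permMatrix ℝ,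
    permMatrix_mem_rowStochastic, ?_⟩
  have hmap : (σ.permMatrix ℝ).map ofReal = σ.permMatrix ℂ := PEquiv.map_toMatrix ofRealHom _
  rw [hmap, permMatrix_mulVec]
  ext j
  simp only [Function.comp_apply, Pi.smul_apply, smul_eq_mul]
  by_cases hj : (j : ℕ) ≤ 3
  · have hσj : (σ j : ℕ) = _ := Fin.coe_cycleRange_of_le (show j ≤ ⟨3, hn⟩ from hj)
    by_cases h3 : (j : ℕ) = 3
    · rw [if_pos (Fin.ext h3)] at hσj
      simp [v, hσj, h3]
    · rw [if_neg (fun h => h3 (congrArg Fin.val h))] at hσj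
      simp [v, hσj, hj, show (j : ℕ) + 1 ≤ 3 by omega, pow_succ']
  · rw [Fin.cycleRange_of_gt (show (⟨3, hn⟩ : Fin n) < j from not_le.1 hj)]
    simp [v, hj]

theorem ofReal_mul_mem_interior_theta (hn : 3 < n) {μ : ℂ} (hμ : μ ∈ Theta n) {t : ℝ}
    (ht0 : 0 < t) (ht1 : t < 1) : (t : ℂ) * μ ∈ interior (Theta n) := by
  obtain ⟨v, hv, hμv⟩ := mem_theta_iff.1 hμ
  have hμ1 := norm_le_one_of_mem_stochasticEigenvalues hv hμv
  by_cases him : μ.im = 0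
  · obtain ⟨w, hw, hIw⟩ := exists_I_mem_stochasticEigenvalues hn
    have hx : |t * μ.re| < 1 := by
      rw [abs_mul, abs_of_pos ht0]
      nlinarith [(abs_re_le_norm μ).trans hμ1, abs_nonneg μ.re]
    have hK := convex_stochasticEigenvalues.ofReal_mem_interior_of_abs_lt_one
      (zero_mem_stochasticEigenvalues hw hIw fun h => by simpa using congrArg im h) (one_mem _)
      hIw (by simpa using pow_mem hIw 2) (by simpa using pow_mem hIw 3) hx
    convert interior_mono (stochasticEigenvalues_subset_theta hw) hK using 1
    apply Complex.ext <;> simp [him]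
  · exact interior_mono (stochasticEigenvalues_subset_theta hv)
      (convex_stochasticEigenvalues.ofReal_mul_mem_interior_of_im_ne_zero
        (zero_mem_stochasticEigenvalues hv hμv fun h => him (by simp [h])) (one_mem _) hμv
        (pow_mem hμv 2) him hμ1 ht0 ht1)

end Theta

/-- For `n > 3`, every point of the topological boundary of `Θ_n` is extremal. -/
theorem frontier_theta_extremal (n : ℕ) (hn : 3 < n) (l : ℂ) (hl : l ∈ frontier (Theta n))
    (γ : ℝ) (hγ : 1 < γ) : (γ : ℂ) * l ∉ Theta n := by
  intro hγl
  have hγ0 : (γ : ℂ) ≠ 0 := by exact_mod_cast (zero_lt_one.trans hγ).ne'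
  have hl_int := ofReal_mul_mem_interior_theta hn hγl (inv_pos.2 (zero_lt_one.trans hγ))
    (inv_lt_one_of_one_lt₀ hγ)
  rw [ofReal_inv, inv_mul_cancel_left₀ hγ0] at hl_int
  exact hl.2 hl_int
end
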